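/- arXiv:2204.05245 — 10 statements merged into one kernel-verified Lean document; each statement's English description precedes it below -/
import Mathlib

section
/- Let (Ω, F) be a measurable space, let P and Q be probability measures on (Ω, F), let 0 < δ < 1, and let E ∈ F be an event with P(E) ≥ 1 − δ and Q(E) < 1 − δ. If the Kullback–Leibler divergence D(P‖Q) is finite, then Q(E) ≥ B(δ) · exp(−D(P‖Q)/(1 − δ)), where B(δ) := exp(−(−δ ln δ − (1 − δ) ln(1 − δ))/(1 − δ)). -/
/-!
Restricting Gibbs' inequality to `E` and to `Eᶜ` gives the data-processing bound
`kl(p, q) ≤ D(P‖Q)` for the Bernoulli laws with parameters `p = P(E)` and `q = Q(E)`.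
Since `t log t` lies above its tangents at `1 - δ` and at `δ`, and `q < 1 - δ ≤ p`,
one gets `kl(p, q) ≥ -h(δ) - (1 - δ) log q`; solving for `q` gives the bound.
-/

open MeasureTheory Real InformationTheory

/-- The Kullback–Leibler divergence of `Bernoulli(p)` from `Bernoulli(q)`. -/
noncomputable def binaryKL (p q : ℝ) : ℝ :=
  p * log (p / q) + (1 - p) * log ((1 - p) / (1 - q))

namespace Real

lemma binEntropy_eq_neg_mul_log_sub (p : ℝ) :
    binEntropy p = -p * log p - (1 - p) * log (1 - p) := by
  simp only [binEntropy, log_inv]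
  ring

lemma tangent_mul_log_le {u v : ℝ} (hu : 0 ≤ u) (hv : 0 < v) :
    v * log v + (u - v) * (log v + 1) ≤ u * log u := by
  rcases hu.eq_or_lt with rfl | hu
  · ring_nf
    linarith
  have h := log_le_sub_one_of_pos (div_pos hv hu)
  rw [log_div hv.ne' hu.ne', le_sub_iff_add_le, le_div_iff₀ hu] at h
  linarith

end Real

lemma neg_binEntropy_sub_mul_log_le_binaryKL {δ p q : ℝ} (hδ0 : 0 < δ) (hq0 : 0 < q)
    (hqp : q < 1 - δ) (hp : 1 - δ ≤ p) (hp1 : p ≤ 1) :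
    -binEntropy δ - (1 - δ) * log q ≤ binaryKL p q := by
  have hq1 : 0 < 1 - q := by linarith
  have h_split : binaryKL p q
      = p * log p + (1 - p) * log (1 - p) - p * log q - (1 - p) * log (1 - q) := by
    rcases hp1.eq_or_lt with rfl | hp1
    · simp [binaryKL, log_div (by linarith : p ≠ 0) hq0.ne']
    · rw [binaryKL, log_div (by linarith) hq0.ne', log_div (by linarith) hq1.ne']
      ring
  -- tangent lines of `t log t` at `1 - δ` and at `δ`
  have h_p := tangent_mul_log_le (by linarith : 0 ≤ p) (by linarith : 0 < 1 - δ)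
  have h_1p := tangent_mul_log_le (by linarith : 0 ≤ 1 - p) hδ0
  have h_log_q : log q ≤ log (1 - δ) := log_le_log hq0 hqp.le
  have h_log_δ : log δ ≤ 0 := log_nonpos hδ0.le (by linarith)
  have h_log_1q : log (1 - q) ≤ 0 := log_nonpos hq1.le (by linarith)
  rw [h_split, binEntropy_eq_neg_mul_log_sub]
  linarith [mul_nonneg (sub_nonneg.2 hp) (sub_nonneg.2 h_log_q),
    mul_nonneg (sub_nonneg.2 hp) (neg_nonneg.2 h_log_δ),
    mul_nonneg (sub_nonneg.2 hp1) (neg_nonneg.2 h_log_1q)]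

namespace MeasureTheory

variable {α : Type*} {mα : MeasurableSpace α} {μ ν : Measure α} {s : Set α}

lemma Measure.rnDeriv_restrict_restrict [SigmaFinite μ] [SigmaFinite ν] (hμν : μ ≪ ν)
    (hs : MeasurableSet s) :
    (μ.restrict s).rnDeriv (ν.restrict s) =ᵐ[ν.restrict s] μ.rnDeriv ν := by
  conv_lhs => rw [← Measure.withDensity_rnDeriv_eq μ ν hμν, restrict_withDensity hs]
  exact Measure.rnDeriv_withDensity _ (Measure.measurable_rnDeriv μ ν)

lemma llr_restrict_ae_eq [SigmaFinite μ] [SigmaFinite ν] (hμν : μ ≪ ν) (hs : MeasurableSet s) :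
    llr (μ.restrict s) (ν.restrict s) =ᵐ[μ.restrict s] llr μ ν := by
  filter_upwards [(hμν.restrict s).ae_le (Measure.rnDeriv_restrict_restrict hμν hs)] with x hx
  simp only [llr_def, hx]

lemma mul_log_le_setIntegral_llr [IsFiniteMeasure μ] [IsFiniteMeasure ν] (hμν : μ ≪ ν)
    (h_int : Integrable (llr μ ν) μ) (hs : MeasurableSet s) :
    μ.real s * log (μ.real s / ν.real s) ≤ ∫ x in s, llr μ ν x ∂μ := by
  have hμν_s : μ.restrict s ≪ ν.restrict s := hμν.restrict s
  have h_llr := llr_restrict_ae_eq hμν hs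
  have h_int_s : Integrable (llr (μ.restrict s) (ν.restrict s)) (μ.restrict s) :=
    h_int.restrict.congr h_llr.symm
  have h_gibbs := mul_log_le_toReal_klDiv hμν_s h_int_s
  rw [toReal_klDiv hμν_s h_int_s, integral_congr_ae h_llr] at h_gibbs
  simpa only [measureReal_restrict_apply_univ, add_sub_assoc, add_le_add_iff_right]
    using h_gibbs

lemma binaryKL_le_integral_llr [IsProbabilityMeasure μ] [IsProbabilityMeasure ν] (hμν : μ ≪ ν)
    (h_int : Integrable (llr μ ν) μ) (hs : MeasurableSet s) :
    binaryKL (μ.real s) (ν.real s) ≤ ∫ x, llr μ ν x ∂μ := by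
  have h_s := mul_log_le_setIntegral_llr hμν h_int hs
  have h_sc := mul_log_le_setIntegral_llr hμν h_int hs.compl
  rw [probReal_compl_eq_one_sub hs, probReal_compl_eq_one_sub hs] at h_sc
  rw [← integral_add_compl hs h_int, binaryKL]
  linarith

end MeasureTheory

theorem stmt_0_general {Ω : Type*} [MeasurableSpace Ω] (P Q : Measure Ω)
    [IsProbabilityMeasure P] [IsProbabilityMeasure Q]
    (δ : ℝ) (hδ0 : 0 < δ)
    (E : Set Ω) (hE : MeasurableSet E)
    (hPE : (P E).toReal ≥ 1 - δ) (hQE : (Q E).toReal < 1 - δ)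
    (hac : P ≪ Q) (hint : Integrable (llr P Q) P) :
    (Q E).toReal ≥
      Real.exp (-(-δ * Real.log δ - (1 - δ) * Real.log (1 - δ)) / (1 - δ)) *
        Real.exp (-(∫ x, llr P Q x ∂P) / (1 - δ)) := by
  rw [← measureReal_def] at hPE hQE ⊢
  have hP_pos : 0 < P.real E := by linarith [measureReal_nonneg (μ := Q) (s := E)]
  have hQ_pos : 0 < Q.real E :=
    ENNReal.toReal_pos (fun hQ ↦ hP_pos.ne' (by simp [measureReal_def, hac hQ]))
      (measure_ne_top Q E)
  have hD : -binEntropy δ - (1 - δ) * log (Q.real E) ≤ ∫ x, llr P Q x ∂P :=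
    (neg_binEntropy_sub_mul_log_le_binaryKL hδ0 hQ_pos hQE hPE measureReal_le_one).trans
      (binaryKL_le_integral_llr hac hint hE)
  rw [← binEntropy_eq_neg_mul_log_sub, ← exp_add, ge_iff_le, ← le_log_iff_exp_le hQ_pos,
    ← add_div, div_le_iff₀ (by linarith)]
  linarith

/-- **Lemma (two-point inequality).** For probability measures `P, Q` on a measurable
space, an event `E` with `P(E) ≥ 1 - δ > Q(E)` (with `0 < δ < 1`), and finite
Kullback–Leibler divergence `D(P‖Q) = ∫ llr P Q dP` (here `P ≪ Q` and the
log-likelihood ratio is `P`-integrable), we have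
`Q(E) ≥ B(δ) · exp(- D(P‖Q) / (1 - δ))` where
`B(δ) = exp(-(-δ ln δ - (1-δ) ln (1-δ)) / (1-δ))`. -/
theorem stmt_0 {Ω : Type*} [MeasurableSpace Ω] (P Q : Measure Ω)
    [IsProbabilityMeasure P] [IsProbabilityMeasure Q]
    (δ : ℝ) (hδ0 : 0 < δ) (hδ1 : δ < 1)
    (E : Set Ω) (hE : MeasurableSet E)
    (hPE : (P E).toReal ≥ 1 - δ) (hQE : (Q E).toReal < 1 - δ)
    (hac : P ≪ Q) (hint : Integrable (llr P Q) P) :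
    (Q E).toReal ≥
      Real.exp (-(-δ * Real.log δ - (1 - δ) * Real.log (1 - δ)) / (1 - δ)) *
        Real.exp (-(∫ x, llr P Q x ∂P) / (1 - δ)) :=
  stmt_0_general P Q δ hδ0 E hE hPE hQE hac hint
end

section
/- Fix an integer m ≥ 2 and positive reals σ_1², …, σ_n². Let G^r be any reduced set for (σ_1², …, σ_n², m). Then Ent(σ²_{G^r}) ≤ 8 ln(m). -/
open Finset Real
open scoped Classical

/-- Entropy-like function `Ent(a_S) = -∑_{i∈S} (a_i/A) ln (a_i/A)` with `A = ∑_{j∈S} a_j`. -/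
noncomputable def ent {ι : Type*} (S : Finset ι) (a : ι → ℝ) : ℝ :=
  -∑ i ∈ S, (a i / ∑ j ∈ S, a j) * Real.log (a i / ∑ j ∈ S, a j)

/-- The minimum variance `σ̲² = min_{i∈[n]} σ_i²`. -/
noncomputable def sigMin (n : ℕ) [NeZero n] (σ : Fin n → ℝ) : ℝ :=
  Finset.univ.inf' Finset.univ_nonempty σ

/-- The `j`-th variance group `G_j = {i ∈ [n] : 2^{j-1} ≤ σ_i²/σ̲² < 2^j}` (for `j ≥ 1`). -/
noncomputable def grp (n : ℕ) [NeZero n] (σ : Fin n → ℝ) (j : ℕ) : Finset (Fin n) :=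
  Finset.univ.filter fun i =>
    (2 : ℝ) ^ (j - 1) ≤ σ i / sigMin n σ ∧ σ i / sigMin n σ < 2 ^ j

/-- `Gr` is a reduced set for `(σ², m)`: `Gr = ∪_j G'_j` where `G'_j = G_j` when
`|G_j| ≤ 2m`, and `G'_j` is an arbitrary `2m`-element subset of `G_j` otherwise. -/
def IsReducedSet (n : ℕ) [NeZero n] (m : ℕ) (σ : Fin n → ℝ) (Gr : Finset (Fin n)) : Prop :=
  ∃ G' : ℕ → Finset (Fin n),
    (∀ j : ℕ, 1 ≤ j →
      ((grp n σ j).card ≤ 2 * m → G' j = grp n σ j) ∧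
      (2 * m < (grp n σ j).card → G' j ⊆ grp n σ j ∧ (G' j).card = 2 * m)) ∧
    (Gr : Set (Fin n)) = ⋃ (j : ℕ) (_ : 1 ≤ j), (G' j : Set (Fin n))

/-
Normalise to `p i = σ i / ∑ σ` on `G^r` and let `J` be the top group index met by `G^r`. An index of
group `j` has `p i ≤ 2 · 2^{-(J - j)}`, and each group meets `G^r` in at most `2m` indices. Gibbs'
inequality against the reference weights `q i = (3/4)^{J-j}/(8m)`, whose total is at most `1`,
bounds the entropy `H` by `log (8m) + log (4/3) · 𝔼_p[J - j]`, while `p i ≤ 2 · 2^{-(J - j)}` gives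
`𝔼_p[J - j] · log 2 ≤ log 2 + H`. Since `log (4/3) < log 2`, the two inequalities together bound `H`.
-/

theorem Finset.sum_mul_log_le_sum_mul_log {ι : Type*} {S : Finset ι} {p q : ι → ℝ}
    (hp : ∀ i ∈ S, 0 ≤ p i) (hq : ∀ i ∈ S, 0 < q i) (hpq : ∑ i ∈ S, q i ≤ ∑ i ∈ S, p i) :
    ∑ i ∈ S, p i * log (q i) ≤ ∑ i ∈ S, p i * log (p i) := by
  have hterm : ∀ i ∈ S, p i * log (q i) - p i * log (p i) ≤ q i - p i := by
    intro i hi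
    rcases (hp i hi).eq_or_lt with hpi | hpi
    · simp [← hpi, (hq i hi).le]
    have := mul_le_mul_of_nonneg_left (log_le_sub_one_of_pos (div_pos (hq i hi) hpi)) hpi.le
    rw [log_div (hq i hi).ne' hpi.ne', mul_sub, mul_sub, mul_div_cancel₀ _ hpi.ne'] at this
    linarith
  have := Finset.sum_le_sum hterm
  rw [Finset.sum_sub_distrib, Finset.sum_sub_distrib] at this
  linarith

theorem Finset.sum_pow_le_of_card_filter_le {ι : Type*} {S : Finset ι} {d : ι → ℕ} {N : ℕ}
    {r : ℝ} (hr₀ : 0 ≤ r) (hr₁ : r < 1) (hN : ∀ k, #{i ∈ S | d i = k} ≤ N) :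
    ∑ i ∈ S, r ^ d i ≤ N / (1 - r) := by
  have hgeom : Summable (fun k : ℕ ↦ r ^ k) := summable_geometric_of_lt_one hr₀ hr₁
  calc ∑ i ∈ S, r ^ d i = ∑ k ∈ S.image d, #{i ∈ S | d i = k} • r ^ k := Finset.sum_comp _ _
    _ ≤ ∑ k ∈ S.image d, N * r ^ k := by
        gcongr with k
        rw [nsmul_eq_mul]
        gcongr
        exact_mod_cast hN k
    _ = N * ∑ k ∈ S.image d, r ^ k := (Finset.mul_sum _ _ _).symm
    _ ≤ N * ∑' k : ℕ, r ^ k := by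
        gcongr
        exact hgeom.sum_le_tsum _ fun k _ ↦ by positivity
    _ = N / (1 - r) := by rw [tsum_geometric_of_lt_one hr₀ hr₁, div_eq_mul_inv]

theorem log_three_halves_mul_ent_le {ι : Type*} {S : Finset ι} {a : ι → ℝ} {d : ι → ℕ} {N : ℕ}
    (hS : S.Nonempty) (ha : ∀ i ∈ S, 0 < a i)
    (had : ∀ i ∈ S, a i * 2 ^ d i ≤ 2 * ∑ j ∈ S, a j) (hN : ∀ k, #{i ∈ S | d i = k} ≤ N) :
    log (3 / 2) * ent S a ≤ log 2 * log (16 * N / 3) := by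
  set A := ∑ j ∈ S, a j
  have hA : 0 < A := Finset.sum_pos ha hS
  set p : ι → ℝ := fun i ↦ a i / A
  have hp : ∀ i ∈ S, 0 < p i := fun i hi ↦ div_pos (ha i hi) hA
  have hp_sum : ∑ i ∈ S, p i = 1 := by rw [← Finset.sum_div, div_self hA.ne']
  have hN₀ : (0 : ℝ) < N := by
    obtain ⟨i, hi⟩ := hS
    have : 0 < #{j ∈ S | d j = d i} := Finset.card_pos.2 ⟨i, by simp [hi]⟩
    exact_mod_cast this.trans_le (hN _)
  set q : ι → ℝ := fun i ↦ (3 / 4) ^ d i / (4 * N)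
  have hq_sum : ∑ i ∈ S, q i ≤ ∑ i ∈ S, p i := by
    have := Finset.sum_pow_le_of_card_filter_le (r := 3 / 4) (by norm_num) (by norm_num) hN
    rw [hp_sum, ← Finset.sum_div, div_le_one (by positivity)]
    norm_num at this
    linarith
  have hgibbs := Finset.sum_mul_log_le_sum_mul_log (fun i hi ↦ (hp i hi).le)
    (fun i _ ↦ by positivity) hq_sum
  have hterm : ∀ i ∈ S, -(log 2 * (p i * log (q i))) ≤
      p i * (log 2 * (log 4 + log N)) + log (4 / 3) * (p i * log 2 - p i * log (p i)) := by
    intro i hi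
    have hpd : log (p i) + d i * log 2 ≤ log 2 := by
      rw [← log_pow, ← log_mul (hp i hi).ne' (by positivity)]
      refine log_le_log (by have := hp i hi; positivity) ?_
      rw [div_mul_eq_mul_div, div_le_iff₀ hA]
      exact had i hi
    have hlogq : log (q i) = d i * log (3 / 4) - (log 4 + log N) := by
      rw [log_div (by positivity) (by positivity), log_pow, log_mul (by norm_num) hN₀.ne']
    have h34 : log (3 / 4) = -log (4 / 3) := by rw [← log_inv]; norm_num
    rw [hlogq, h34]
    have := mul_le_mul_of_nonneg_left hpd (mul_nonneg (hp i hi).le (log_nonneg (by norm_num :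
      (1 : ℝ) ≤ 4 / 3)))
    nlinarith [hp i hi]
  have hsum := Finset.sum_le_sum hterm
  simp only [Finset.sum_neg_distrib, Finset.sum_add_distrib, ← Finset.mul_sum, ← Finset.sum_mul,
    Finset.sum_sub_distrib, hp_sum] at hsum
  have hent : ent S a = -∑ i ∈ S, p i * log (p i) := rfl
  have h32 : log (3 / 2) = log 2 - log (4 / 3) := by
    rw [← log_div (by norm_num) (by norm_num)]; norm_num
  have h163 : log (16 * N / 3) = log 4 + log N + log (4 / 3) := by
    rw [← log_mul (by norm_num) hN₀.ne', ← log_mul (by positivity) (by norm_num)]; ring_nf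
  rw [hent, h32, h163]
  nlinarith [log_pos (by norm_num : (1 : ℝ) < 2)]

section Groups

variable {n : ℕ} [NeZero n] {σ : Fin n → ℝ}

theorem mem_grp {i : Fin n} {j : ℕ} :
    i ∈ grp n σ j ↔ 2 ^ (j - 1) ≤ σ i / sigMin n σ ∧ σ i / sigMin n σ < 2 ^ j := by
  simp [grp]

theorem le_of_mem_grp_of_mem_grp {i : Fin n} {j k : ℕ} (hj : i ∈ grp n σ j)
    (hk : i ∈ grp n σ k) : j ≤ k := by
  by_contra! hkj
  have : (2 : ℝ) ^ k ≤ 2 ^ (j - 1) := pow_le_pow_right₀ one_le_two (by omega)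
  linarith [(mem_grp.1 hj).1, (mem_grp.1 hk).2]

theorem eq_of_mem_grp_of_mem_grp {i : Fin n} {j k : ℕ} (hj : i ∈ grp n σ j)
    (hk : i ∈ grp n σ k) : j = k :=
  le_antisymm (le_of_mem_grp_of_mem_grp hj hk) (le_of_mem_grp_of_mem_grp hk hj)

theorem one_le_of_mem_grp {i : Fin n} {j : ℕ} (hj : i ∈ grp n σ j) : 1 ≤ j := by
  by_contra! h
  obtain rfl : j = 0 := by omega
  have := mem_grp.1 hj
  norm_num at this
  linarith

theorem sigMin_pos (hσ : ∀ i, 0 < σ i) : 0 < sigMin n σ :=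
  (Finset.lt_inf'_iff _).2 fun i _ ↦ hσ i

theorem sigMin_le (i : Fin n) : sigMin n σ ≤ σ i :=
  Finset.inf'_le σ (Finset.mem_univ i)

theorem exists_mem_grp (hσ : ∀ i, 0 < σ i) (i : Fin n) : ∃ j, i ∈ grp n σ j := by
  obtain ⟨k, hk⟩ := exists_nat_pow_near ((one_le_div (sigMin_pos hσ)).2 (sigMin_le i))
    one_lt_two
  exact ⟨k + 1, mem_grp.2 (by simpa using hk)⟩

theorem mul_two_pow_sub_lt (hσ : ∀ i, 0 < σ i) {i k : Fin n} {j l : ℕ} (hi : i ∈ grp n σ j)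
    (hk : k ∈ grp n σ l) (hjl : j ≤ l) : σ i * 2 ^ (l - j) < 2 * σ k := by
  have hs := sigMin_pos hσ
  have hσi : σ i < sigMin n σ * 2 ^ j := by
    rw [mul_comm]; exact (div_lt_iff₀ hs).1 (mem_grp.1 hi).2
  have hσk : sigMin n σ * 2 ^ (l - 1) ≤ σ k := by
    rw [mul_comm]; exact (le_div_iff₀ hs).1 (mem_grp.1 hk).1
  have hl : 2 ^ l = 2 * (2 : ℝ) ^ (l - 1) := by
    rw [← pow_succ', Nat.sub_add_cancel (one_le_of_mem_grp hk)]
  calc σ i * 2 ^ (l - j) < sigMin n σ * 2 ^ j * 2 ^ (l - j) := by gcongr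
    _ = 2 * (sigMin n σ * 2 ^ (l - 1)) := by
        rw [mul_assoc, ← pow_add, Nat.add_sub_cancel' hjl, hl]; ring
    _ ≤ 2 * σ k := by gcongr

theorem IsReducedSet.card_filter_le {m : ℕ} {Gr : Finset (Fin n)} (hGr : IsReducedSet n m σ Gr)
    {ℓ : Fin n → ℕ} (hℓ : ∀ i, i ∈ grp n σ (ℓ i)) (j : ℕ) : #{i ∈ Gr | ℓ i = j} ≤ 2 * m := by
  obtain ⟨G', hG', hcov⟩ := hGr
  have hG'j : ∀ j, 1 ≤ j → G' j ⊆ grp n σ j ∧ #(G' j) ≤ 2 * m := by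
    intro j hj
    by_cases h : #(grp n σ j) ≤ 2 * m
    · rw [(hG' j hj).1 h]
      exact ⟨subset_rfl, h⟩
    · obtain ⟨hsub, hcard⟩ := (hG' j hj).2 (not_le.1 h)
      exact ⟨hsub, hcard.le⟩
  rcases Nat.eq_zero_or_pos j with rfl | hj
  · simp [fun i ↦ Nat.pos_iff_ne_zero.1 (one_le_of_mem_grp (hℓ i))]
  refine (Finset.card_le_card fun i hi ↦ ?_).trans (hG'j j hj).2
  obtain ⟨hiGr, rfl⟩ := Finset.mem_filter.1 hi
  have hi' : i ∈ (Gr : Set (Fin n)) := hiGr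
  rw [hcov, Set.mem_iUnion₂] at hi'
  obtain ⟨k, hk, hik⟩ := hi'
  rwa [eq_of_mem_grp_of_mem_grp (hℓ i) ((hG'j k hk).1 hik)]

end Groups

theorem log_two_mul_log_le_log_three_halves_mul {m : ℕ} (hm : 2 ≤ m) :
    log 2 * log (16 * ((2 * m : ℕ) : ℝ) / 3) ≤ log (3 / 2) * (8 * log m) := by
  have hm' : (2 : ℝ) ≤ m := by exact_mod_cast hm
  have hlog2 : log 2 ≤ log m := log_le_log two_pos hm'
  have hsplit : log (16 * ((2 * m : ℕ) : ℝ) / 3) = log (64 / 3) + log m - log 2 := by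
    rw [← log_mul (by norm_num) (by positivity), ← log_div (by positivity) two_ne_zero]
    push_cast; ring_nf
  have h64 : log (64 / 3) ≤ 8 * log (3 / 2) := by
    have := log_le_log (by norm_num) (show (64 / 3 : ℝ) ≤ (3 / 2) ^ 8 by norm_num)
    rwa [log_pow, Nat.cast_ofNat] at this
  have h2 : log 2 ≤ 8 * log (3 / 2) := by
    have := log_le_log (by norm_num) (show (2 : ℝ) ≤ (3 / 2) ^ 8 by norm_num)
    rwa [log_pow, Nat.cast_ofNat] at this
  rw [hsplit]
  nlinarith [mul_nonneg (sub_nonneg.2 h2) (sub_nonneg.2 hlog2), log_pos one_lt_two]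

/-- **Lemma.** For `m ≥ 2` and a reduced set `G^r`, `Ent(σ²_{G^r}) ≤ 8 ln m`. -/
theorem stmt_1 (n m : ℕ) [NeZero n] (hm : 2 ≤ m)
    (σ : Fin n → ℝ) (hσ : ∀ i, 0 < σ i)
    (Gr : Finset (Fin n)) (hGr : IsReducedSet n m σ Gr) :
    ent Gr σ ≤ 8 * Real.log m := by
  choose ℓ hℓ using exists_mem_grp hσ
  rcases Gr.eq_empty_or_nonempty with rfl | hne
  · simpa [ent] using log_natCast_nonneg m
  obtain ⟨i₀, hi₀, hmax⟩ := Gr.exists_max_image ℓ hne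
  have hratio : ∀ i ∈ Gr, σ i * 2 ^ (ℓ i₀ - ℓ i) ≤ 2 * ∑ j ∈ Gr, σ j := fun i hi ↦
    (mul_two_pow_sub_lt hσ (hℓ i) (hℓ i₀) (hmax i hi)).le.trans <|
      mul_le_mul_of_nonneg_left (Finset.single_le_sum (fun j _ ↦ (hσ j).le) hi₀) two_pos.le
  have hfiber : ∀ k, #{i ∈ Gr | ℓ i₀ - ℓ i = k} ≤ 2 * m := by
    refine fun k ↦ (Finset.card_le_card fun i hi ↦ ?_).trans (hGr.card_filter_le hℓ (ℓ i₀ - k))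
    have := hmax i (Finset.mem_filter.1 hi).1
    simp only [Finset.mem_filter] at hi ⊢
    exact ⟨hi.1, by omega⟩
  have hent := log_three_halves_mul_ent_le hne (fun i _ ↦ hσ i) hratio hfiber
  exact le_of_mul_le_mul_left (hent.trans (log_two_mul_log_le_log_three_halves_mul hm))
    (log_pos (by norm_num))
end

section
/- Let m ≥ 2 and k ≥ 1 be integers, let u > 0, and let s_1, …, s_k be nonnegative reals such that s_k > 0 and, for every j ∈ {1, …, k}, either s_j = 0 or 2^{j−1} u ≤ s_j < 2m · 2^{j} u. Then the entropy of the family of nonzero entries of (s_1, …, s_k) satisfies Ent((s_j)_{j : s_j > 0}) ≤ 3 ln(2m). -/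
open Finset Real
open scoped Classical

/-! Shannon entropy is dominated by Rényi entropy of order `1/4`: Jensen's inequality for `log`
gives `(3/4) H(p) ≤ log ∑ p_j^{1/4}`, and the right side only grows if each `p_j` is replaced by
an upper bound. Since the total mass is at least `s_k ≥ 2^{k-1} u`, the normalised weights satisfy
`p_j ≤ 4m · 2^{-(k-j)}`, so `∑ p_j^{1/4}` is at most `(4m)^{1/4}` times a geometric series of
ratio `2^{-1/4}`. This yields `H ≤ (1/3) log(4m) + O(1)`, which is below `3 log(2m)` for `m ≥ 2`. -/

lemma ent_eq_sum_negMulLog {ι : Type*} (S : Finset ι) (a : ι → ℝ) :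
    ent S a = ∑ i ∈ S, negMulLog (a i / ∑ j ∈ S, a j) := by
  simp only [ent, negMulLog, neg_mul, sum_neg_distrib]

lemma one_sub_mul_sum_negMulLog_le_log_sum_rpow {ι : Type*} {S : Finset ι} {p c : ι → ℝ}
    {α : ℝ} (hα : 0 ≤ α) (hp : ∀ i ∈ S, 0 < p i) (hp_sum : ∑ i ∈ S, p i = 1)
    (hpc : ∀ i ∈ S, p i ≤ c i) :
    (1 - α) * ∑ i ∈ S, negMulLog (p i) ≤ log (∑ i ∈ S, c i ^ α) := by
  have hc : ∀ i ∈ S, 0 < c i := fun i hi => (hp i hi).trans_le (hpc i hi)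
  have jensen : ∑ i ∈ S, p i * log (c i ^ α / p i) ≤ log (∑ i ∈ S, p i * (c i ^ α / p i)) :=
    strictConcaveOn_log_Ioi.concaveOn.le_map_sum (fun i hi => (hp i hi).le) hp_sum
      fun i hi => div_pos (rpow_pos_of_pos (hc i hi) α) (hp i hi)
  have hcancel : ∀ i ∈ S, p i * (c i ^ α / p i) = c i ^ α :=
    fun i hi => mul_div_cancel₀ _ (hp i hi).ne'
  rw [sum_congr rfl hcancel] at jensen
  refine le_trans ?_ jensen
  rw [mul_sum]
  refine sum_le_sum fun i hi => ?_
  have hlog : α * log (p i) ≤ α * log (c i) :=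
    mul_le_mul_of_nonneg_left (log_le_log (hp i hi) (hpc i hi)) hα
  rw [log_div (rpow_pos_of_pos (hc i hi) α).ne' (hp i hi).ne', log_rpow (hc i hi), negMulLog]
  nlinarith [(hp i hi).le]

lemma sum_pow_sub_le_inv_one_sub {S : Finset ℕ} {k : ℕ} (hS : ∀ j ∈ S, j ≤ k) {ρ : ℝ}
    (hρ₀ : 0 ≤ ρ) (hρ₁ : ρ < 1) :
    ∑ j ∈ S, ρ ^ (k - j) ≤ (1 - ρ)⁻¹ := by
  calc ∑ j ∈ S, ρ ^ (k - j) ≤ ∑ j ∈ range (k + 1), ρ ^ (k + 1 - 1 - j) :=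
        sum_le_sum_of_subset_of_nonneg (fun j hj => mem_range.2 (Nat.lt_succ_of_le (hS j hj)))
          fun j _ _ => pow_nonneg hρ₀ _
    _ = ∑ j ∈ Ico 0 (k + 1), ρ ^ j := by rw [sum_range_reflect, range_eq_Ico]
    _ ≤ ρ ^ 0 / (1 - ρ) := geom_sum_Ico_le_of_lt_one hρ₀ hρ₁
    _ = (1 - ρ)⁻¹ := by rw [pow_zero, one_div]

lemma sum_rpow_mul_half_pow_sub_le {S : Finset ℕ} {k : ℕ} (hS : ∀ j ∈ S, j ≤ k) {C α : ℝ}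
    (hC : 0 ≤ C) (hα : 0 < α) :
    ∑ j ∈ S, (C * (1 / 2) ^ (k - j)) ^ α ≤ C ^ α * (1 - (1 / 2) ^ α)⁻¹ := by
  have hρ₁ : ((1:ℝ) / 2) ^ α < 1 := rpow_lt_one (by norm_num) (by norm_num) hα
  simp_rw [mul_rpow hC (pow_nonneg (by norm_num : (0:ℝ) ≤ 1 / 2) _),
    ← rpow_pow_comm (by norm_num : (0:ℝ) ≤ 1 / 2), ← mul_sum]
  exact mul_le_mul_of_nonneg_left (sum_pow_sub_le_inv_one_sub hS (by positivity) hρ₁)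
    (rpow_nonneg hC α)

lemma half_rpow_quarter_le : ((1:ℝ) / 2) ^ (1 / 4 : ℝ) ≤ 9 / 10 := by
  have h4 : (((1:ℝ) / 2) ^ (1 / 4 : ℝ)) ^ 4 = 1 / 2 := by
    rw [← rpow_natCast, ← rpow_mul (by norm_num)]; norm_num
  have : (((1:ℝ) / 2) ^ (1 / 4 : ℝ)) ^ 4 ≤ (9 / 10) ^ 4 := by rw [h4]; norm_num
  exact (pow_le_pow_iff_left₀ (by positivity) (by norm_num) (by norm_num)).1 this

lemma log_rpow_quarter_mul_inv_le {M : ℝ} (hM : 4 ≤ M) :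
    log ((2 * M) ^ (1 / 4 : ℝ) * (1 - (1 / 2) ^ (1 / 4 : ℝ))⁻¹) ≤ 9 / 4 * log M := by
  set ρ : ℝ := (1 / 2) ^ (1 / 4 : ℝ)
  have hρ : ρ ≤ 9 / 10 := half_rpow_quarter_le
  have hgap_pos : 0 < 1 - ρ := by linarith
  have hgap : (1 / 10 : ℝ) ^ 4 ≤ (1 - ρ) ^ 4 := pow_le_pow_left₀ (by norm_num) (by linarith) 4
  have hpow : ((2 * M) ^ (1 / 4 : ℝ) * (1 - ρ)⁻¹) ^ 4 = 2 * M / (1 - ρ) ^ 4 := by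
    rw [mul_pow, ← rpow_natCast ((2 * M) ^ _), ← rpow_mul (by linarith), inv_pow]
    norm_num [div_eq_mul_inv]
  have hbound : 2 * M / (1 - ρ) ^ 4 ≤ M ^ 9 := by
    rw [div_le_iff₀ (by positivity)]
    have hM8 : (4:ℝ) ^ 8 ≤ M ^ 8 := pow_le_pow_left₀ (by norm_num) hM 8
    nlinarith [pow_pos (by linarith : (0:ℝ) < M) 9]
  have := log_le_log (by positivity) (hpow ▸ hbound)
  rw [log_pow, log_pow] at this
  push_cast at this
  linarith

lemma div_le_mul_half_pow_sub {a A u M : ℝ} {j k : ℕ} (hjk : j ≤ k) (hk : 1 ≤ k) (hu : 0 < u)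
    (hM : 0 ≤ M) (ha : a < M * 2 ^ j * u) (hA : 2 ^ (k - 1) * u ≤ A) :
    a / A ≤ 2 * M * (1 / 2) ^ (k - j) := by
  have hdyadic : (2:ℝ) ^ j = 2 * 2 ^ (k - 1) * (1 / 2) ^ (k - j) := by
    rw [← pow_succ', Nat.sub_add_cancel hk, ← Nat.add_sub_cancel' hjk, pow_add,
      Nat.add_sub_cancel_left, mul_assoc, ← mul_pow]
    norm_num
  rw [div_le_iff₀ (lt_of_lt_of_le (by positivity) hA)]
  calc a ≤ M * 2 ^ j * u := ha.le
    _ = 2 * M * (1 / 2) ^ (k - j) * (2 ^ (k - 1) * u) := by rw [hdyadic]; ring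
    _ ≤ 2 * M * (1 / 2) ^ (k - j) * A := by gcongr

theorem stmt_2_general (m k : ℕ) (hm : 2 ≤ m) (hk : 1 ≤ k) (u : ℝ) (hu : 0 < u)
    (s : ℕ → ℝ) (hsk : 0 < s k)
    (hs : ∀ j ∈ Finset.Icc 1 k,
      s j = 0 ∨ ((2 : ℝ) ^ (j - 1) * u ≤ s j ∧ s j < 2 * m * 2 ^ j * u)) :
    ent ((Finset.Icc 1 k).filter fun j => 0 < s j) s ≤ 3 * Real.log (2 * m) := by
  set S := (Finset.Icc 1 k).filter fun j => 0 < s j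
  set A := ∑ j ∈ S, s j
  have hS : ∀ j ∈ S, j ∈ Icc 1 k ∧ 0 < s j := fun j hj => mem_filter.1 hj
  have hbounds : ∀ j ∈ S, 2 ^ (j - 1) * u ≤ s j ∧ s j < 2 * m * 2 ^ j * u := fun j hj =>
    (hs j (hS j hj).1).resolve_left (hS j hj).2.ne'
  have hkS : k ∈ S := mem_filter.2 ⟨mem_Icc.2 ⟨hk, le_rfl⟩, hsk⟩
  have hA : 2 ^ (k - 1) * u ≤ A :=
    (hbounds k hkS).1.trans (single_le_sum (fun j hj => (hS j hj).2.le) hkS)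
  have hApos : 0 < A := lt_of_lt_of_le (by positivity) hA
  have hcap : ∀ j ∈ S, s j / A ≤ 2 * (2 * m) * (1 / 2) ^ (k - j) := fun j hj =>
    div_le_mul_half_pow_sub (mem_Icc.1 (hS j hj).1).2 hk hu (by positivity) (hbounds j hj).2 hA
  have hrenyi := one_sub_mul_sum_negMulLog_le_log_sum_rpow (α := 1 / 4) (by norm_num)
    (fun j hj => div_pos (hS j hj).2 hApos) (by rw [← sum_div, div_self hApos.ne']) hcap
  have hgeom := sum_rpow_mul_half_pow_sub_le (S := S) (k := k)
    (fun j hj => (mem_Icc.1 (hS j hj).1).2) (by positivity : (0:ℝ) ≤ 2 * (2 * m))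
    (by norm_num : (0:ℝ) < 1 / 4)
  have hlog := log_le_log (sum_pos (fun j _ => by positivity) ⟨k, hkS⟩) hgeom
  have hnum := log_rpow_quarter_mul_inv_le (M := 2 * m) (by norm_cast; omega)
  rw [ent_eq_sum_negMulLog]
  linarith

/-- **Lemma.** If `s_1, …, s_k ≥ 0` with `s_k > 0` and each nonzero `s_j` satisfies
`2^{j-1} u ≤ s_j < 2m·2^j u` (for `u > 0`, `m ≥ 2`), then the entropy of the family of
nonzero entries of `s` is at most `3 ln(2m)`. -/
theorem stmt_2 (m k : ℕ) (hm : 2 ≤ m) (hk : 1 ≤ k) (u : ℝ) (hu : 0 < u)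
    (s : ℕ → ℝ) (hnn : ∀ j ∈ Finset.Icc 1 k, 0 ≤ s j) (hsk : 0 < s k)
    (hs : ∀ j ∈ Finset.Icc 1 k,
      s j = 0 ∨ ((2 : ℝ) ^ (j - 1) * u ≤ s j ∧ s j < 2 * m * 2 ^ j * u)) :
    ent ((Finset.Icc 1 k).filter fun j => 0 < s j) s ≤ 3 * Real.log (2 * m) :=
  stmt_2_general m k hm hk u hu s hsk hs
end

section
/- Let n ≥ 1 and 1 ≤ m ≤ n be integers, let ε > 0, and let μ, μ̂ : [n] → ℝ. Let T ⊆ [n] with |T| = m be such that μ_i ≥ μ_j for all i ∈ T and j ∈ [n] \ T (i.e., T is a set of indices with the m largest values of μ). Suppose μ̂_i > μ_i − ε/2 for all i ∈ T and μ̂_j < μ_j + ε/2 for all j ∈ [n] \ T. Let R ⊆ [n] with |R| = m be such that μ̂_i ≥ μ̂_j for all i ∈ R and j ∈ [n] \ R (i.e., R is a set of indices with the m largest values of μ̂). Then every i ∈ R satisfies μ_i > min_{l∈T} μ_l − ε; that is, every selected index is ε-approximate top-m with respect to μ. -/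
open Finset Real

/-- **Deterministic accuracy of naive elimination.** If the empirical means of the true
top-`m` arms are not underestimated by more than `ε/2` and those of the remaining arms
are not overestimated by more than `ε/2`, then every arm among the empirical top-`m`
is `ε`-approximate top-`m`. -/
theorem stmt_3 (n m : ℕ) (hn : 1 ≤ n) (hm1 : 1 ≤ m) (hmn : m ≤ n)
    (ε : ℝ) (hε : 0 < ε) (μ μhat : Fin n → ℝ)
    (T : Finset (Fin n)) (hTcard : T.card = m)
    (hTtop : ∀ i ∈ T, ∀ j ∉ T, μ j ≤ μ i)
    (hunder : ∀ i ∈ T, μhat i > μ i - ε / 2)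
    (hover : ∀ j ∉ T, μhat j < μ j + ε / 2)
    (R : Finset (Fin n)) (hRcard : R.card = m)
    (hRtop : ∀ i ∈ R, ∀ j ∉ R, μhat j ≤ μhat i) :
    ∀ i ∈ R, μ i > T.inf' (Finset.card_pos.mp (by omega)) μ - ε := by
  intro i hiR
  by_cases hiT : i ∈ T
  · have : T.inf' (Finset.card_pos.mp (by omega)) μ ≤ μ i := Finset.inf'_le _ hiT
    linarith
  · -- T \ R is nonempty
    have hcard : (T \ R).card = (R \ T).card := by
      have h1 := Finset.card_sdiff_add_card_inter T R
      have h2 := Finset.card_sdiff_add_card_inter R T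
      rw [Finset.inter_comm] at h2
      omega
    have hne : (T \ R).Nonempty := by
      rw [← Finset.card_pos, hcard, Finset.card_pos]
      exact ⟨i, Finset.mem_sdiff.mpr ⟨hiR, hiT⟩⟩
    obtain ⟨j, hj⟩ := hne
    rw [Finset.mem_sdiff] at hj
    have h1 : μhat j ≤ μhat i := hRtop i hiR j hj.2
    have h2 : μhat j > μ j - ε / 2 := hunder j hj.1
    have h3 : μhat i < μ i + ε / 2 := hover i hiT
    have h4 : T.inf' (Finset.card_pos.mp (by omega)) μ ≤ μ j := Finset.inf'_le _ hj.1
    linarith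
end

section
/- Let L be a nonempty finite set, let a = (a_i)_{i∈L} be positive reals, and let M ⊆ L with both M and L \ M nonempty. Then (∑_{i∈M} a_i) · Ent(a_M) + (∑_{i∈L\M} a_i) · Ent(a_{L\M}) ≥ (∑_{i∈L} a_i) · (Ent(a_L) − ln 2). -/
open Finset Real
open scoped Classical

private lemma ent_aux {ι : Type*} {S : Finset ι} (a : ι → ℝ) (h : ∀ i ∈ S, 0 < a i)
    (hS : S.Nonempty) {A : ℝ} (hA : 0 < A) :
    ∑ i ∈ S, a i * Real.log (a i / A)
      = -((∑ i ∈ S, a i) * ent S a) + (∑ i ∈ S, a i) * Real.log ((∑ i ∈ S, a i) / A) := by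
  set B := ∑ i ∈ S, a i with hB
  have hBpos : 0 < B := Finset.sum_pos h hS
  have key : ∀ i ∈ S, a i * Real.log (a i / A)
      = a i * Real.log (a i / B) + a i * Real.log (B / A) := by
    intro i hi
    have hai := h i hi
    have : a i / A = (a i / B) * (B / A) := by
      field_simp
    rw [this, Real.log_mul (by positivity) (by positivity), mul_add]
  rw [Finset.sum_congr rfl key, Finset.sum_add_distrib, ← Finset.sum_mul, ← hB]
  have : B * ent S a = -∑ i ∈ S, a i * Real.log (a i / B) := by
    rw [ent, mul_neg, Finset.mul_sum]
    congr 1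
    refine Finset.sum_congr rfl fun i hi => ?_
    rw [← hB, ← mul_assoc, mul_div_cancel₀ _ hBpos.ne']
  rw [this]
  ring

private lemma two_entropy_le {x y : ℝ} (hx : 0 < x) (hy : 0 < y) :
    -(x * Real.log (x / (x + y))) - y * Real.log (y / (x + y)) ≤ (x + y) * Real.log 2 := by
  have hxy : 0 < x + y := by linarith
  have h1 : Real.log ((x + y) / x) ≤ Real.log 2 + ((x + y) / (2 * x) - 1) := by
    have : (x + y) / x = 2 * ((x + y) / (2 * x)) := by field_simp
    rw [this, Real.log_mul (by norm_num) (by positivity)]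
    have := Real.log_le_sub_one_of_pos (show 0 < (x + y) / (2 * x) by positivity)
    linarith
  have h2 : Real.log ((x + y) / y) ≤ Real.log 2 + ((x + y) / (2 * y) - 1) := by
    have : (x + y) / y = 2 * ((x + y) / (2 * y)) := by field_simp
    rw [this, Real.log_mul (by norm_num) (by positivity)]
    have := Real.log_le_sub_one_of_pos (show 0 < (x + y) / (2 * y) by positivity)
    linarith
  have e1 : Real.log (x / (x + y)) = -Real.log ((x + y) / x) := by
    rw [← Real.log_inv]; congr 1; field_simp
  have e2 : Real.log (y / (x + y)) = -Real.log ((x + y) / y) := by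
    rw [← Real.log_inv]; congr 1; field_simp
  have hx1 : x * Real.log ((x + y) / x) ≤ x * (Real.log 2 + ((x + y) / (2 * x) - 1)) :=
    mul_le_mul_of_nonneg_left h1 hx.le
  have hy1 : y * Real.log ((x + y) / y) ≤ y * (Real.log 2 + ((x + y) / (2 * y) - 1)) :=
    mul_le_mul_of_nonneg_left h2 hy.le
  have ex : x * ((x + y) / (2 * x)) = (x + y) / 2 := by field_simp
  have ey : y * ((x + y) / (2 * y)) = (x + y) / 2 := by field_simp
  rw [e1, e2]
  nlinarith [hx1, hy1]

/-- **Grouping lower bound for entropy.** For positive reals `(a_i)_{i∈L}` and a split of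
`L` into nonempty parts `M` and `L \ M`,
`(∑_{M} a) Ent(a_M) + (∑_{L\M} a) Ent(a_{L\M}) ≥ (∑_L a)(Ent(a_L) - ln 2)`. -/
theorem stmt_6 {ι : Type*} [DecidableEq ι] (L : Finset ι) (hL : L.Nonempty)
    (a : ι → ℝ) (ha : ∀ i ∈ L, 0 < a i)
    (M : Finset ι) (hM : M ⊆ L) (hMne : M.Nonempty) (hLMne : (L \ M).Nonempty) :
    (∑ i ∈ M, a i) * ent M a + (∑ i ∈ L \ M, a i) * ent (L \ M) a
      ≥ (∑ i ∈ L, a i) * (ent L a - Real.log 2) := by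
  set N := L \ M with hN
  have haM : ∀ i ∈ M, 0 < a i := fun i hi => ha i (hM hi)
  have haN : ∀ i ∈ N, 0 < a i := fun i hi => ha i (Finset.sdiff_subset hi)
  set AM := ∑ i ∈ M, a i with hAM
  set AN := ∑ i ∈ N, a i with hAN
  set A := ∑ i ∈ L, a i with hA
  have hAMpos : 0 < AM := Finset.sum_pos haM hMne
  have hANpos : 0 < AN := Finset.sum_pos haN hLMne
  have hApos : 0 < A := Finset.sum_pos ha hL
  have hsplit : AM + AN = A := by
    rw [hAM, hAN, hA, hN, add_comm]
    exact Finset.sum_sdiff hM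
  -- A * ent L a = -∑_L a i log(a i / A)
  have hLent : A * ent L a = -∑ i ∈ L, a i * Real.log (a i / A) := by
    rw [ent, mul_neg, Finset.mul_sum]
    congr 1
    refine Finset.sum_congr rfl fun i hi => ?_
    rw [← hA, ← mul_assoc, mul_div_cancel₀ _ hApos.ne']
  have hsum : ∑ i ∈ L, a i * Real.log (a i / A)
      = ∑ i ∈ M, a i * Real.log (a i / A) + ∑ i ∈ N, a i * Real.log (a i / A) := by
    rw [hN, ← Finset.sum_sdiff hM]; ring
  have hMeq := ent_aux a haM hMne hApos
  have hNeq := ent_aux a haN hLMne hApos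
  rw [← hAM] at hMeq
  rw [← hAN] at hNeq
  have hbound := two_entropy_le hAMpos hANpos
  rw [hsplit] at hbound
  have hident : A * ent L a
      = AM * ent M a + AN * ent N a - AM * Real.log (AM / A) - AN * Real.log (AN / A) := by
    rw [hLent, hsum, hMeq, hNeq]; ring
  nlinarith [hident, hbound]
end

section
/- Let m ≥ 1 be an integer, let L be a finite set with |L| = 2m, and let σ² = (σ_i²)_{i∈L} be positive reals. Then (1/C(2m, m−1)) · ∑_{M⊆L, |M|=m} (∑_{i∈M} σ_i²) · Ent(σ²_M) ≥ (1/2) · (Ent(σ²_L) − ln 2) · ∑_{i∈L} σ_i², where C(2m, m−1) denotes the binomial coefficient 'choose m−1 from 2m' and the outer sum ranges over all m-element subsets M of L. -/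
open Finset Real
open scoped Classical

/-- Mass times entropy: `A_S * ent S σ = A_S log A_S - ∑ σ_i log σ_i`. -/
lemma ent_mul_mass {ι : Type*} (S : Finset ι) (σ : ι → ℝ) (hS : S.Nonempty)
    (hσ : ∀ i ∈ S, 0 < σ i) :
    (∑ i ∈ S, σ i) * ent S σ =
      (∑ i ∈ S, σ i) * Real.log (∑ i ∈ S, σ i) - ∑ i ∈ S, σ i * Real.log (σ i) := by
  have hA : 0 < ∑ j ∈ S, σ j := Finset.sum_pos hσ hS
  unfold ent
  rw [mul_neg, Finset.mul_sum]
  have hterm : ∀ i ∈ S,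
      (∑ j ∈ S, σ j) * ((σ i / ∑ j ∈ S, σ j) * Real.log (σ i / ∑ j ∈ S, σ j))
        = σ i * Real.log (σ i) - σ i * Real.log (∑ j ∈ S, σ j) := by
    intro i hi
    rw [Real.log_div (hσ i hi).ne' hA.ne']
    field_simp
  rw [Finset.sum_congr rfl hterm, Finset.sum_sub_distrib, ← Finset.sum_mul]
  ring

/-- Superadditivity of `x log x`: `∑ σ_i log σ_i ≤ A_S log A_S`. -/
lemma sum_mul_log_le {ι : Type*} (S : Finset ι) (σ : ι → ℝ) (hS : S.Nonempty)
    (hσ : ∀ i ∈ S, 0 < σ i) :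
    ∑ i ∈ S, σ i * Real.log (σ i) ≤ (∑ i ∈ S, σ i) * Real.log (∑ i ∈ S, σ i) := by
  rw [Finset.sum_mul]
  refine Finset.sum_le_sum fun i hi => ?_
  exact mul_le_mul_of_nonneg_left
    (Real.log_le_log (hσ i hi) (Finset.single_le_sum (fun j hj => (hσ j hj).le) hi))
    (hσ i hi).le

/-- Two-point convexity of `x log x`. -/
lemma two_point_convex {x y : ℝ} (hx : 0 < x) (hy : 0 < y) :
    (x + y) * Real.log ((x + y) / 2) ≤ x * Real.log x + y * Real.log y := by
  have h := Real.convexOn_mul_log.2 (Set.mem_Ici.2 hx.le) (Set.mem_Ici.2 hy.le)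
    (by norm_num : (0:ℝ) ≤ 1/2) (by norm_num : (0:ℝ) ≤ 1/2) (by norm_num)
  simp only [smul_eq_mul] at h
  have hxy : (1/2 : ℝ) * x + 1/2 * y = (x + y) / 2 := by ring
  rw [hxy] at h
  nlinarith [h]

/-- Number of `m`-subsets of `L` containing a fixed `i ∈ L`. -/
lemma card_filter_mem_powersetCard {ι : Type*} (L : Finset ι) (m : ℕ) (hm : 1 ≤ m)
    {i : ι} (hi : i ∈ L) :
    ((L.powersetCard m).filter (fun M => i ∈ M)).card = (L.card - 1).choose (m - 1) := by
  classical
  have := Finset.card_bij (fun (M : Finset ι) _ => M.erase i)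
    (s := (L.powersetCard m).filter (fun M => i ∈ M))
    (t := (L.erase i).powersetCard (m - 1))
    (fun M hM => by
      simp only [Finset.mem_filter, Finset.mem_powersetCard] at hM
      exact Finset.mem_powersetCard.2
        ⟨Finset.erase_subset_erase i hM.1.1, by rw [Finset.card_erase_of_mem hM.2, hM.1.2]⟩)
    (fun M₁ h₁ M₂ h₂ h => by
      simp only [Finset.mem_filter, Finset.mem_powersetCard] at h₁ h₂
      rw [← Finset.insert_erase h₁.2, ← Finset.insert_erase h₂.2, h])
    (fun N hN => by
      simp only [Finset.mem_powersetCard] at hN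
      have hiN : i ∉ N := fun h => Finset.notMem_erase i L (hN.1 h)
      refine ⟨insert i N, ?_, ?_⟩
      · simp only [Finset.mem_filter, Finset.mem_powersetCard]
        refine ⟨⟨Finset.insert_subset hi (hN.1.trans (Finset.erase_subset i L)), ?_⟩,
          Finset.mem_insert_self i N⟩
        rw [Finset.card_insert_of_notMem hiN, hN.2]
        omega
      · show (insert i N).erase i = N
        rw [Finset.erase_insert hiN])
  rw [this, Finset.card_powersetCard, Finset.card_erase_of_mem hi]

/-- Double counting over all `m`-subsets. -/
lemma sum_powersetCard_sum {ι : Type*} (L : Finset ι) (m : ℕ) (hm : 1 ≤ m) (f : ι → ℝ) :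
    ∑ M ∈ L.powersetCard m, ∑ i ∈ M, f i
      = ((L.card - 1).choose (m - 1) : ℝ) * ∑ i ∈ L, f i := by
  classical
  have h1 : ∀ M ∈ L.powersetCard m, ∑ i ∈ M, f i = ∑ i ∈ L, if i ∈ M then f i else 0 := by
    intro M hM
    rw [← Finset.sum_filter, Finset.filter_mem_eq_inter,
      Finset.inter_eq_right.2 (Finset.mem_powersetCard.1 hM).1]
  rw [Finset.sum_congr rfl h1, Finset.sum_comm]
  have h2 : ∀ i ∈ L, ∑ M ∈ L.powersetCard m, (if i ∈ M then f i else 0)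
      = ((L.card - 1).choose (m - 1) : ℝ) * f i := by
    intro i hi
    rw [← Finset.sum_filter, Finset.sum_const, card_filter_mem_powersetCard L m hm hi,
      nsmul_eq_mul]
  rw [Finset.sum_congr rfl h2, ← Finset.mul_sum]

/-- **Averaged entropy inequality over half-size subsets.** For positive reals
`(σ_i²)_{i∈L}` with `|L| = 2m`,
`(1/C(2m, m-1)) ∑_{M ⊆ L, |M| = m} (∑_{i∈M} σ_i²) Ent(σ²_M)
  ≥ (1/2)(Ent(σ²_L) - ln 2) ∑_{i∈L} σ_i²`. -/
theorem stmt_7 {ι : Type*} (m : ℕ) (hm : 1 ≤ m) (L : Finset ι) (hL : L.card = 2 * m)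
    (σ : ι → ℝ) (hσ : ∀ i ∈ L, 0 < σ i) :
    (1 / (Nat.choose (2 * m) (m - 1) : ℝ)) *
        ∑ M ∈ Finset.powersetCard m L, (∑ i ∈ M, σ i) * ent M σ
      ≥ (1 / 2) * (ent L σ - Real.log 2) * ∑ i ∈ L, σ i := by
  classical
  -- Notation
  set A := ∑ i ∈ L, σ i with hA_def
  set E := ∑ i ∈ L, σ i * Real.log (σ i) with hE_def
  set T := ∑ M ∈ L.powersetCard m, (∑ i ∈ M, σ i) * Real.log (∑ i ∈ M, σ i) with hT_def
  set Aℓ : ℝ := A * (Real.log A - Real.log 2) with hAl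
  have hLne : L.Nonempty := Finset.card_pos.mp (by omega)
  have hA : 0 < A := Finset.sum_pos hσ hLne
  -- basic facts about members of the powersetCard
  have hMfacts : ∀ M ∈ L.powersetCard m, M ⊆ L ∧ M.card = m := fun M hM =>
    Finset.mem_powersetCard.1 hM
  -- binomial identities
  have hk : m - 1 + 1 = m := Nat.succ_pred_eq_of_pos hm
  have hnat1 : (2*m).choose m * m = (2*m).choose (m-1) * (m+1) := by
    have h := Nat.choose_succ_right_eq (2*m) (m-1)
    rw [hk] at h
    have h2 : 2*m - (m-1) = m+1 := by omega
    rw [h2] at h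
    exact h
  have hnat2 : (2*m).choose m = 2 * (2*m - 1).choose (m - 1) := by
    obtain ⟨k, rfl⟩ : ∃ k, m = k + 1 := ⟨m - 1, by omega⟩
    have e1 : 2 * (k+1) = (2*k+1) + 1 := by ring
    have e2 : 2 * (k+1) - 1 = 2*k+1 := by omega
    have e3 : k + 1 - 1 = k := by omega
    have hsymm : (2*k+1).choose (k+1) = (2*k+1).choose k := by
      have := Nat.choose_symm (show k+1 ≤ 2*k+1 by omega)
      have h4 : 2*k+1 - (k+1) = k := by omega
      rw [h4] at this
      exact this.symm
    rw [e2, e3, e1, Nat.choose_succ_succ, hsymm]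
    try ring
  set c₁ : ℝ := ((2*m).choose (m-1) : ℝ) with hc₁
  set c₂ : ℝ := ((2*m - 1).choose (m-1) : ℝ) with hc₂
  set rc : ℝ := ((2*m).choose m : ℝ) with hrc
  have hc₁pos : 0 < c₁ := by
    rw [hc₁]; exact_mod_cast Nat.choose_pos (by omega)
  have hmR : (0:ℝ) < (m:ℝ) := by exact_mod_cast hm
  have hR1 : rc * (m:ℝ) = c₁ * ((m:ℝ) + 1) := by
    rw [hrc, hc₁]; exact_mod_cast hnat1
  have hR2 : rc = 2 * c₂ := by
    rw [hrc, hc₂]; exact_mod_cast hnat2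
  -- rewrite the big sum using ent_mul_mass and double counting
  have hsum_eq : ∑ M ∈ Finset.powersetCard m L, (∑ i ∈ M, σ i) * ent M σ = T - c₂ * E := by
    have h1 : ∀ M ∈ L.powersetCard m, (∑ i ∈ M, σ i) * ent M σ
        = (∑ i ∈ M, σ i) * Real.log (∑ i ∈ M, σ i) - ∑ i ∈ M, σ i * Real.log (σ i) := by
      intro M hM
      obtain ⟨hMs, hMc⟩ := hMfacts M hM
      exact ent_mul_mass M σ (Finset.card_pos.mp (by omega)) (fun i hi => hσ i (hMs hi))
    rw [Finset.sum_congr rfl h1, Finset.sum_sub_distrib,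
      sum_powersetCard_sum L m hm (fun i => σ i * Real.log (σ i)), hL]
  -- the entropy of the whole family
  have hentL : A * ent L σ = A * Real.log A - E :=
    ent_mul_mass L σ hLne hσ
  -- per-subset inequality, combining convexity and superadditivity
  have hpair : ∀ M ∈ L.powersetCard m,
      (m:ℝ) * (A * (Real.log A - Real.log 2)) + E
        ≤ ((m:ℝ) + 1) * ((∑ i ∈ M, σ i) * Real.log (∑ i ∈ M, σ i)
            + (∑ i ∈ L \ M, σ i) * Real.log (∑ i ∈ L \ M, σ i)) := by
    intro M hM
    obtain ⟨hMs, hMc⟩ := hMfacts M hM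
    have hMne : M.Nonempty := Finset.card_pos.mp (by omega)
    have hNne : (L \ M).Nonempty := by
      refine Finset.card_pos.mp ?_
      rw [Finset.card_sdiff_of_subset hMs, hL, hMc]; omega
    have hMpos : ∀ i ∈ M, 0 < σ i := fun i hi => hσ i (hMs hi)
    have hNpos : ∀ i ∈ L \ M, 0 < σ i := fun i hi => hσ i (Finset.sdiff_subset hi)
    have hx : 0 < ∑ i ∈ M, σ i := Finset.sum_pos hMpos hMne
    have hy : 0 < ∑ i ∈ L \ M, σ i := Finset.sum_pos hNpos hNne
    have hsplit : (∑ i ∈ L \ M, σ i) + ∑ i ∈ M, σ i = A := Finset.sum_sdiff hMs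
    have hEsplit : (∑ i ∈ L \ M, σ i * Real.log (σ i)) + ∑ i ∈ M, σ i * Real.log (σ i) = E :=
      Finset.sum_sdiff hMs
    -- convexity bound
    have hconv : A * (Real.log A - Real.log 2)
        ≤ (∑ i ∈ M, σ i) * Real.log (∑ i ∈ M, σ i)
          + (∑ i ∈ L \ M, σ i) * Real.log (∑ i ∈ L \ M, σ i) := by
      have h := two_point_convex hx hy
      rw [show (∑ i ∈ M, σ i) + (∑ i ∈ L \ M, σ i) = A by linarith] at h
      rw [Real.log_div hA.ne' two_ne_zero] at h
      linarith
    -- superadditivity bound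
    have hsup : E ≤ (∑ i ∈ M, σ i) * Real.log (∑ i ∈ M, σ i)
        + (∑ i ∈ L \ M, σ i) * Real.log (∑ i ∈ L \ M, σ i) := by
      have h1 := sum_mul_log_le M σ hMne hMpos
      have h2 := sum_mul_log_le (L \ M) σ hNne hNpos
      linarith
    nlinarith [mul_le_mul_of_nonneg_left hconv hmR.le]
  -- sum over all M; the complement map is a bijection on powersetCard m L
  have hcompl : ∑ M ∈ L.powersetCard m,
      (∑ i ∈ L \ M, σ i) * Real.log (∑ i ∈ L \ M, σ i) = T := by
    rw [hT_def]
    refine Finset.sum_nbij' (fun M => L \ M) (fun M => L \ M) ?_ ?_ ?_ ?_ ?_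
    · intro M hM
      obtain ⟨hMs, hMc⟩ := hMfacts M hM
      refine Finset.mem_powersetCard.2 ⟨Finset.sdiff_subset, ?_⟩
      rw [Finset.card_sdiff_of_subset hMs, hL, hMc]; omega
    · intro M hM
      obtain ⟨hMs, hMc⟩ := hMfacts M hM
      refine Finset.mem_powersetCard.2 ⟨Finset.sdiff_subset, ?_⟩
      rw [Finset.card_sdiff_of_subset hMs, hL, hMc]; omega
    · intro M hM
      exact Finset.sdiff_sdiff_eq_self (hMfacts M hM).1
    · intro M hM
      exact Finset.sdiff_sdiff_eq_self (hMfacts M hM).1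
    · intro M hM; rfl
  have hcard : (L.powersetCard m).card = (2*m).choose m := by
    rw [Finset.card_powersetCard, hL]
  -- summed inequality
  have hTbound : rc * ((m:ℝ) * (A * (Real.log A - Real.log 2)) + E) ≤ ((m:ℝ) + 1) * (2 * T) := by
    have h := Finset.sum_le_sum hpair
    rw [Finset.sum_const, hcard, nsmul_eq_mul] at h
    rw [← Finset.mul_sum, Finset.sum_add_distrib, hcompl, ← hT_def] at h
    rw [hrc]
    linarith
  rw [← hAl] at hTbound
  clear_value A E T Aℓ c₁ c₂ rc
  -- finish with algebra
  rw [ge_iff_le, hsum_eq,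
    show (1:ℝ)/c₁ * (T - c₂*E) = (T - c₂*E)/c₁ by ring, le_div_iff₀ hc₁pos]
  have e1 : rc * (m:ℝ) * Aℓ = c₁ * ((m:ℝ) + 1) * Aℓ := by rw [hR1]
  have e2 : rc * ((m:ℝ) + 1) * E = 2 * c₂ * ((m:ℝ) + 1) * E := by rw [hR2]
  have e3 : rc * (m:ℝ) * E = c₁ * ((m:ℝ) + 1) * E := by rw [hR1]
  have hgoal : (1:ℝ) / 2 * (ent L σ - Real.log 2) * A * c₁
      = c₁ / 2 * (Aℓ - E) := by
    rw [hAl]; linear_combination (c₁ / 2) * hentL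
  rw [hgoal]
  have h5 : c₁ * ((m:ℝ) + 1) * Aℓ + rc * E ≤ ((m:ℝ) + 1) * (2 * T) := by
    linarith [hTbound, e1]
  have h6 : ((m:ℝ) + 1) * (c₁ / 2 * (Aℓ - E)) ≤ ((m:ℝ) + 1) * (T - c₂ * E) := by
    linarith [h5, e2, e3]
  have hm1 : (0:ℝ) < (m:ℝ) + 1 := by positivity
  exact le_of_mul_le_mul_left h6 hm1
end

section
/- Fix an integer m ≥ 2 and positive reals σ_1², …, σ_n². Let G^r be any reduced set for (σ_1², …, σ_n², m) with |G^r| ≥ 2m, and let L ⊆ G^r with |L| = 2m be a set of indices attaining the 2m largest values of σ_i² among i ∈ G^r. Then (1/C(2m, m−1)) · ∑_{M⊆L, |M|=m} (∑_{i∈M} σ_i²) · Ent(σ²_M) ≥ (1/174) · (∑_{i∈G^r} σ_i²) · Ent(σ²_{G^r}) − ln(2) · ∑_{i∈L} σ_i². -/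
open Finset Real
open scoped Classical

private lemma log_ratio_mono {A x y : ℝ} (hx : 0 < x) (hxy : x ≤ y) (hyA : Real.exp 1 * y ≤ A) :
    x * Real.log (A / x) ≤ y * Real.log (A / y) := by
  have hy : 0 < y := lt_of_lt_of_le hx hxy
  have hA : 0 < A := lt_of_lt_of_le (by positivity) hyA
  have h1 : Real.log (A / x) = Real.log (A / y) + Real.log (y / x) := by
    rw [← Real.log_mul (by positivity) (by positivity)]
    congr 1; field_simp
  have h2 : Real.log (y / x) ≤ y / x - 1 := Real.log_le_sub_one_of_pos (by positivity)
  have h3 : (1:ℝ) ≤ Real.log (A / y) := by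
    have hle : Real.exp 1 ≤ A / y := by rw [le_div_iff₀ hy]; linarith
    calc (1:ℝ) = Real.log (Real.exp 1) := (Real.log_exp 1).symm
    _ ≤ Real.log (A / y) := Real.log_le_log (Real.exp_pos 1) hle
  have h4 : x * Real.log (y / x) ≤ y - x := by
    calc x * Real.log (y/x) ≤ x * (y/x - 1) := mul_le_mul_of_nonneg_left h2 hx.le
    _ = y - x := by field_simp
  rw [h1]
  nlinarith [h3, h4, hxy]

private lemma log_crude {A x y : ℝ} (hx : 0 < x) (hxy : x ≤ y) (hyA : y ≤ A) :
    x * Real.log (A / x) ≤ y * (Real.log (A / y) + 1) := by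
  have hy : 0 < y := lt_of_lt_of_le hx hxy
  have hA : 0 < A := lt_of_lt_of_le hy hyA
  have h1 : Real.log (A / x) = Real.log (A / y) + Real.log (y / x) := by
    rw [← Real.log_mul (by positivity) (by positivity)]
    congr 1; field_simp
  have h2 : Real.log (y / x) ≤ y / x - 1 := Real.log_le_sub_one_of_pos (by positivity)
  have h3 : (0:ℝ) ≤ Real.log (A / y) := Real.log_nonneg (by rw [le_div_iff₀ hy]; linarith)
  have h4 : x * Real.log (y / x) ≤ y - x := by
    calc x * Real.log (y/x) ≤ x * (y/x - 1) := mul_le_mul_of_nonneg_left h2 hx.le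
    _ = y - x := by field_simp
  rw [h1]
  nlinarith [h3, h4, hxy]

private lemma aux_geom (t : ℕ) : ∑ j ∈ Finset.Icc 1 t, (2:ℝ)^j ≤ 2^(t+1) := by
  induction t with
  | zero => simp
  | succ t ih =>
    rw [Finset.sum_Icc_succ_top (by omega : 1 ≤ t+1)]
    have h2 : (2:ℝ)^(t+1+1) = 2^(t+1) + 2^(t+1) := by ring
    linarith

private lemma aux_geom' (t : ℕ) : ∑ j ∈ Finset.Icc 1 t, (2:ℝ)^j * ((t - j : ℕ):ℝ) ≤ 2^(t+1) := by
  induction t with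
  | zero => simp
  | succ t ih =>
    rw [Finset.sum_Icc_succ_top (by omega : 1 ≤ t+1)]
    simp only [Nat.sub_self, Nat.cast_zero, mul_zero, add_zero]
    have h1 : ∑ j ∈ Finset.Icc 1 t, (2:ℝ)^j * ((t+1-j:ℕ):ℝ)
        = ∑ j ∈ Finset.Icc 1 t, ((2:ℝ)^j * ((t-j:ℕ):ℝ) + 2^j) := by
      apply Finset.sum_congr rfl; intro j hj
      have hj' := (Finset.mem_Icc.1 hj).2
      have he : (t+1-j : ℕ) = (t-j) + 1 := by omega
      rw [he]; push_cast; ring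
    rw [h1, Finset.sum_add_distrib]
    have h2 := aux_geom t
    have h3 : (2:ℝ)^(t+1+1) = 2^(t+1) + 2^(t+1) := by ring
    linarith

private lemma ent_nonneg {ι : Type*} (S : Finset ι) (σ : ι → ℝ) (h : ∀ i ∈ S, 0 < σ i) :
    0 ≤ ent S σ := by
  unfold ent
  rw [neg_nonneg]
  apply Finset.sum_nonpos
  intro i hi
  have hσi := h i hi
  have hA : σ i ≤ ∑ j ∈ S, σ j := Finset.single_le_sum (fun j hj => (h j hj).le) hi
  have hApos : 0 < ∑ j ∈ S, σ j := lt_of_lt_of_le hσi hA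
  have hp1 : σ i / ∑ j ∈ S, σ j ≤ 1 := by rw [div_le_one hApos]; exact hA
  have hp0 : 0 ≤ σ i / ∑ j ∈ S, σ j := by positivity
  exact mul_nonpos_of_nonneg_of_nonpos hp0 (Real.log_nonpos hp0 hp1)

private lemma ent_mul_eq {ι : Type*} (S : Finset ι) (σ : ι → ℝ) (h : ∀ i ∈ S, 0 < σ i) :
    (∑ i ∈ S, σ i) * ent S σ = ∑ i ∈ S, σ i * Real.log ((∑ j ∈ S, σ j) / σ i) := by
  rcases S.eq_empty_or_nonempty with rfl | hS
  · simp [ent]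
  have hA : 0 < ∑ j ∈ S, σ j := Finset.sum_pos h hS
  unfold ent
  rw [mul_neg, Finset.mul_sum, ← Finset.sum_neg_distrib]
  apply Finset.sum_congr rfl
  intro i hi
  have hσi := h i hi
  rw [Real.log_div hσi.ne' hA.ne', Real.log_div hA.ne' hσi.ne']
  field_simp
  ring

private lemma pairing {ι : Type*} [DecidableEq ι] {L M : Finset ι} {σ : ι → ℝ} (h : ∀ i ∈ L, 0 < σ i)
    (hM : M ⊆ L) (hMne : M.Nonempty) (hNne : (L \ M).Nonempty) :
    (∑ i ∈ L, σ i) * ent L σ - Real.log 2 * (∑ i ∈ L, σ i)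
      ≤ (∑ i ∈ M, σ i) * ent M σ + (∑ i ∈ L \ M, σ i) * ent (L \ M) σ := by
  classical
  have hσM : ∀ i ∈ M, 0 < σ i := fun i hi => h i (hM hi)
  have hσN : ∀ i ∈ L \ M, 0 < σ i := fun i hi => h i (Finset.sdiff_subset hi)
  have hAM : 0 < ∑ i ∈ M, σ i := Finset.sum_pos hσM hMne
  have hAN : 0 < ∑ i ∈ L \ M, σ i := Finset.sum_pos hσN hNne
  have hsplit : (∑ i ∈ L \ M, σ i) + ∑ i ∈ M, σ i = ∑ i ∈ L, σ i := Finset.sum_sdiff hM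
  have hAL : 0 < ∑ i ∈ L, σ i := by linarith
  rw [ent_mul_eq M σ hσM, ent_mul_eq (L \ M) σ hσN, ent_mul_eq L σ h]
  have hMsum : ∑ i ∈ M, σ i * Real.log ((∑ j ∈ L, σ j) / σ i)
      = (∑ i ∈ M, σ i * Real.log ((∑ j ∈ M, σ j) / σ i))
        + (∑ j ∈ M, σ j) * Real.log ((∑ j ∈ L, σ j) / ∑ j ∈ M, σ j) := by
    have step : ∀ i ∈ M, σ i * Real.log ((∑ j ∈ L, σ j) / σ i)
        = σ i * Real.log ((∑ j ∈ M, σ j) / σ i)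
          + σ i * Real.log ((∑ j ∈ L, σ j) / ∑ j ∈ M, σ j) := by
      intro i hi
      have h0 := hσM i hi
      have hid : ((∑ j ∈ M, σ j) / σ i) * ((∑ j ∈ L, σ j) / ∑ j ∈ M, σ j)
          = (∑ j ∈ L, σ j) / σ i := by
        rw [div_mul_div_comm, mul_comm (∑ j ∈ M, σ j), mul_div_mul_right _ _ hAM.ne']
      rw [← mul_add, ← Real.log_mul (by positivity) (by positivity), hid]
    rw [Finset.sum_congr rfl step, Finset.sum_add_distrib, ← Finset.sum_mul]
  have hNsum : ∑ i ∈ L \ M, σ i * Real.log ((∑ j ∈ L, σ j) / σ i)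
      = (∑ i ∈ L \ M, σ i * Real.log ((∑ j ∈ L \ M, σ j) / σ i))
        + (∑ j ∈ L \ M, σ j) * Real.log ((∑ j ∈ L, σ j) / ∑ j ∈ L \ M, σ j) := by
    have step : ∀ i ∈ L \ M, σ i * Real.log ((∑ j ∈ L, σ j) / σ i)
        = σ i * Real.log ((∑ j ∈ L \ M, σ j) / σ i)
          + σ i * Real.log ((∑ j ∈ L, σ j) / ∑ j ∈ L \ M, σ j) := by
      intro i hi
      have h0 := hσN i hi
      have hid : ((∑ j ∈ L \ M, σ j) / σ i) * ((∑ j ∈ L, σ j) / ∑ j ∈ L \ M, σ j)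
          = (∑ j ∈ L, σ j) / σ i := by
        rw [div_mul_div_comm, mul_comm (∑ j ∈ L \ M, σ j), mul_div_mul_right _ _ hAN.ne']
      rw [← mul_add, ← Real.log_mul (by positivity) (by positivity), hid]
    rw [Finset.sum_congr rfl step, Finset.sum_add_distrib, ← Finset.sum_mul]
  have hLsplit : ∑ i ∈ L, σ i * Real.log ((∑ j ∈ L, σ j) / σ i)
      = (∑ i ∈ L \ M, σ i * Real.log ((∑ j ∈ L, σ j) / σ i))
        + ∑ i ∈ M, σ i * Real.log ((∑ j ∈ L, σ j) / σ i) :=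
    (Finset.sum_sdiff hM).symm
  have hent : (∑ j ∈ M, σ j) * Real.log ((∑ j ∈ L, σ j) / ∑ j ∈ M, σ j)
      + (∑ j ∈ L \ M, σ j) * Real.log ((∑ j ∈ L, σ j) / ∑ j ∈ L \ M, σ j)
      ≤ Real.log 2 * ∑ j ∈ L, σ j := by
    set AM := ∑ j ∈ M, σ j
    set AN := ∑ j ∈ L \ M, σ j
    set AL := ∑ j ∈ L, σ j
    have e1 : Real.log (AL / AM) ≤ Real.log 2 + (AL / (2 * AM) - 1) := by
      have he : Real.log (AL / AM) = Real.log 2 + Real.log (AL / (2 * AM)) := by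
        rw [← Real.log_mul (by norm_num) (by positivity)]
        congr 1; field_simp
      have h2 := Real.log_le_sub_one_of_pos (show 0 < AL / (2 * AM) by positivity)
      linarith
    have e2 : Real.log (AL / AN) ≤ Real.log 2 + (AL / (2 * AN) - 1) := by
      have he : Real.log (AL / AN) = Real.log 2 + Real.log (AL / (2 * AN)) := by
        rw [← Real.log_mul (by norm_num) (by positivity)]
        congr 1; field_simp
      have h2 := Real.log_le_sub_one_of_pos (show 0 < AL / (2 * AN) by positivity)
      linarith
    have g1 : AM * (AL / (2 * AM)) = AL / 2 := by field_simp
    have g2 : AN * (AL / (2 * AN)) = AL / 2 := by field_simp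
    have f1 : AM * Real.log (AL / AM) ≤ AM * Real.log 2 + AL / 2 - AM := by
      have hf := mul_le_mul_of_nonneg_left e1 hAM.le
      have hx : AM * (Real.log 2 + (AL / (2 * AM) - 1))
          = AM * Real.log 2 + AM * (AL / (2 * AM)) - AM := by ring
      rw [hx, g1] at hf
      linarith
    have f2 : AN * Real.log (AL / AN) ≤ AN * Real.log 2 + AL / 2 - AN := by
      have hf := mul_le_mul_of_nonneg_left e2 hAN.le
      have hx : AN * (Real.log 2 + (AL / (2 * AN) - 1))
          = AN * Real.log 2 + AN * (AL / (2 * AN)) - AN := by ring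
      rw [hx, g2] at hf
      linarith
    have hmul : AM * Real.log 2 + AN * Real.log 2 = Real.log 2 * AL := by
      rw [← hsplit]; ring
    linarith
  linarith [hLsplit, hMsum, hNsum, hent]

set_option maxHeartbeats 1600000 in
/-- **Lemma.** For `m ≥ 2`, a reduced set `G^r` with `|G^r| ≥ 2m`, and `L ⊆ G^r` the
`2m` indices with the largest variances in `G^r`,
`(1/C(2m, m-1)) ∑_{M ⊆ L, |M| = m} (∑_{i∈M} σ_i²) Ent(σ²_M)
  ≥ (1/174)(∑_{i∈G^r} σ_i²) Ent(σ²_{G^r}) - ln(2) ∑_{i∈L} σ_i²`. -/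
theorem stmt_8 (n m : ℕ) [NeZero n] (hm : 2 ≤ m)
    (σ : Fin n → ℝ) (hσ : ∀ i, 0 < σ i)
    (Gr : Finset (Fin n)) (hGr : IsReducedSet n m σ Gr) (hGrcard : 2 * m ≤ Gr.card)
    (L : Finset (Fin n)) (hLsub : L ⊆ Gr) (hLcard : L.card = 2 * m)
    (hLtop : ∀ i ∈ L, ∀ j ∈ Gr \ L, σ j ≤ σ i) :
    (1 / (Nat.choose (2 * m) (m - 1) : ℝ)) *
        ∑ M ∈ Finset.powersetCard m L, (∑ i ∈ M, σ i) * ent M σ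
      ≥ (1 / 174) * (∑ i ∈ Gr, σ i) * ent Gr σ - Real.log 2 * ∑ i ∈ L, σ i := by
  classical
  have hmR : (2:ℝ) ≤ (m:ℝ) := by exact_mod_cast hm
  have hmpos : 0 < m := by omega
  have hLne : L.Nonempty := by rw [← Finset.card_pos, hLcard]; omega
  have hGrne : Gr.Nonempty := ⟨hLne.choose, hLsub hLne.choose_spec⟩
  have hσL : ∀ i ∈ L, 0 < σ i := fun i _ => hσ i
  have hALpos : 0 < ∑ i ∈ L, σ i := Finset.sum_pos hσL hLne
  have hAGpos : 0 < ∑ i ∈ Gr, σ i := Finset.sum_pos (fun i _ => hσ i) hGrne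
  set AL := ∑ i ∈ L, σ i with hALdef
  set AG := ∑ i ∈ Gr, σ i with hAGdef
  clear_value AL
  clear_value AG
  set fL := AL * ent L σ with hfLdef
  clear_value fL
  have hfLnn : 0 ≤ fL := by rw [hfLdef]; exact mul_nonneg hALpos.le (ent_nonneg L σ hσL)
  -- minimum of L
  obtain ⟨i₀, hi₀L, hi₀⟩ := Finset.exists_mem_eq_inf' hLne σ
  set s := L.inf' hLne σ with hsdef
  clear_value s
  have hspos : 0 < s := hi₀ ▸ hσ i₀
  have hsle : ∀ i ∈ L, s ≤ σ i := by
    intro i hi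
    rw [hsdef]
    exact Finset.inf'_le σ hi
  have hALge : 2*(m:ℝ)*s ≤ AL := by
    have h1 := Finset.card_nsmul_le_sum L σ s hsle
    rw [hLcard, nsmul_eq_mul] at h1
    push_cast at h1
    linarith
  have hsAL : 2*s ≤ AL := by nlinarith
  -- sigMin
  have hσmle : ∀ i, sigMin n σ ≤ σ i := fun i => Finset.inf'_le σ (Finset.mem_univ i)
  have hσmpos : 0 < sigMin n σ := by
    obtain ⟨i, _, hi⟩ := Finset.exists_mem_eq_inf' (Finset.univ_nonempty (α := Fin n)) σ
    rw [sigMin, hi]; exact hσ i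
  set σm := sigMin n σ with hσmdef
  clear_value σm
  -- reduced set structure
  obtain ⟨G', hG'spec, hGrEq⟩ := hGr
  have hmemGr : ∀ i, i ∈ Gr ↔ ∃ j, 1 ≤ j ∧ i ∈ G' j := by
    intro i
    have h1 : i ∈ (Gr : Set (Fin n)) ↔ i ∈ ⋃ (j : ℕ) (_ : 1 ≤ j), (G' j : Set (Fin n)) := by
      rw [hGrEq]
    simpa using h1
  have hG'sub : ∀ j, 1 ≤ j → G' j ⊆ grp n σ j := by
    intro j hj
    rcases le_or_gt (grp n σ j).card (2*m) with h | h
    · rw [(hG'spec j hj).1 h]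
    · exact ((hG'spec j hj).2 h).1
  have hG'card : ∀ j, 1 ≤ j → ((G' j).card : ℝ) ≤ 2*(m:ℝ) := by
    intro j hj
    rcases le_or_gt (grp n σ j).card (2*m) with h | h
    · rw [(hG'spec j hj).1 h]; exact_mod_cast h
    · rw [((hG'spec j hj).2 h).2]; push_cast; linarith
  have hgrp_lb : ∀ j i, i ∈ grp n σ j → (2:ℝ)^(j-1) * σm ≤ σ i := by
    intro j i hi
    have h1 := ((Finset.mem_filter.1 hi).2).1
    have hpos : 0 < sigMin n σ := hσmdef ▸ hσmpos
    rw [le_div_iff₀ hpos] at h1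
    rw [hσmdef]
    exact h1
  have hgrp_ub : ∀ j i, i ∈ grp n σ j → σ i < (2:ℝ)^j * σm := by
    intro j i hi
    have h1 := ((Finset.mem_filter.1 hi).2).2
    have hpos : 0 < sigMin n σ := hσmdef ▸ hσmpos
    rw [div_lt_iff₀ hpos] at h1
    rw [hσmdef]
    exact h1
  -- the group index t of the minimum of L
  obtain ⟨t, ht1, hi₀G⟩ := (hmemGr i₀).1 (hLsub hi₀L)
  have hts : (2:ℝ)^(t-1) * σm ≤ s := hi₀ ▸ hgrp_lb t i₀ (hG'sub t ht1 hi₀G)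
  have hts' : s < (2:ℝ)^t * σm := hi₀ ▸ hgrp_ub t i₀ (hG'sub t ht1 hi₀G)
  have h2t : (2:ℝ)^t = 2 * 2^(t-1) := by
    have he : t = (t-1) + 1 := by omega
    conv_lhs => rw [he]
    rw [pow_succ]; ring
  -- D = Gr \ L
  set D := Gr \ L with hDdef
  have hDle : ∀ i ∈ D, σ i ≤ s := fun i hi => hi₀ ▸ hLtop i₀ hi₀L i hi
  have hDsub : D ⊆ (Finset.Icc 1 t).biUnion G' := by
    intro i hi
    obtain ⟨j, hj1, hjmem⟩ := (hmemGr i).1 (Finset.mem_sdiff.1 hi).1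
    have hlb := hgrp_lb j i (hG'sub j hj1 hjmem)
    have hjt : j ≤ t := by
      by_contra hcon
      push_neg at hcon
      have hje : (2:ℝ)^t ≤ 2^(j-1) := by
        apply pow_le_pow_right₀ (by norm_num)
        omega
      have := hDle i hi
      nlinarith [hσmpos]
    exact Finset.mem_biUnion.2 ⟨j, Finset.mem_Icc.2 ⟨hj1, hjt⟩, hjmem⟩
  have hdisj : (↑(Finset.Icc 1 t) : Set ℕ).PairwiseDisjoint G' := by
    have key : ∀ a b, 1 ≤ a → a < b → Disjoint (G' a) (G' b) := by
      intro a b h1 hab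
      rw [Finset.disjoint_left]
      intro i hia hib
      have hub := hgrp_ub a i (hG'sub a h1 hia)
      have hlb := hgrp_lb b i (hG'sub b (by omega) hib)
      have hje : (2:ℝ)^a ≤ 2^(b-1) := by
        apply pow_le_pow_right₀ (by norm_num)
        omega
      nlinarith [hσmpos]
    intro a ha b hb hab
    simp only [Finset.coe_Icc, Set.mem_Icc] at ha hb
    rcases hab.lt_or_gt with h | h
    · exact key a b ha.1 h
    · exact (key b a hb.1 h).symm
  have hbiGr : ∀ i ∈ (Finset.Icc 1 t).biUnion G', i ∈ Gr := by
    intro i hi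
    obtain ⟨j, hj, hji⟩ := Finset.mem_biUnion.1 hi
    exact (hmemGr i).2 ⟨j, (Finset.mem_Icc.1 hj).1, hji⟩
  -- sum over D of σ
  have hDsum : ∑ i ∈ D, σ i ≤ 8*(m:ℝ)*s := by
    calc ∑ i ∈ D, σ i ≤ ∑ i ∈ (Finset.Icc 1 t).biUnion G', σ i :=
      Finset.sum_le_sum_of_subset_of_nonneg hDsub (fun i _ _ => (hσ i).le)
    _ = ∑ j ∈ Finset.Icc 1 t, ∑ i ∈ G' j, σ i := Finset.sum_biUnion hdisj
    _ ≤ ∑ j ∈ Finset.Icc 1 t, (2*(m:ℝ)*σm) * 2^j := by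
        apply Finset.sum_le_sum
        intro j hj
        have hj1 : 1 ≤ j := (Finset.mem_Icc.1 hj).1
        have hc : ∑ i ∈ G' j, σ i ≤ ((G' j).card : ℝ) * ((2:ℝ)^j * σm) := by
          have := Finset.sum_le_card_nsmul (G' j) σ ((2:ℝ)^j * σm)
            (fun i hi => (hgrp_ub j i (hG'sub j hj1 hi)).le)
          rwa [nsmul_eq_mul] at this
        have hc2 : ((G' j).card : ℝ) * ((2:ℝ)^j * σm) ≤ (2*(m:ℝ)) * ((2:ℝ)^j * σm) := by
          apply mul_le_mul_of_nonneg_right (hG'card j hj1) (by positivity)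
        calc ∑ i ∈ G' j, σ i ≤ (2*(m:ℝ)) * ((2:ℝ)^j * σm) := le_trans hc hc2
        _ = (2*(m:ℝ)*σm) * 2^j := by ring
    _ = (2*(m:ℝ)*σm) * ∑ j ∈ Finset.Icc 1 t, (2:ℝ)^j := by rw [Finset.mul_sum]
    _ ≤ (2*(m:ℝ)*σm) * 2^(t+1) := by
        apply mul_le_mul_of_nonneg_left (aux_geom t) (by positivity)
    _ = 8*(m:ℝ)*(2^(t-1)*σm) := by rw [pow_succ, h2t]; ring
    _ ≤ 8*(m:ℝ)*s := by nlinarith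
  have hAGsplit : (∑ i ∈ D, σ i) + AL = AG := by
    rw [hALdef, hAGdef, hDdef]
    exact Finset.sum_sdiff hLsub
  have hAG5 : AG ≤ 5*AL := by linarith
  have hALAG : AL ≤ AG := by
    have h0 : 0 ≤ ∑ i ∈ D, σ i := Finset.sum_nonneg (fun i _ => (hσ i).le)
    linarith
  -- lower bound on fL
  have hlogALs : 0 ≤ Real.log (AL/s) := Real.log_nonneg (by rw [le_div_iff₀ hspos]; linarith)
  have hfL_ge : (m:ℝ)*s*Real.log (AL/s) ≤ fL := by
    set T := L.filter (fun i => AL/((m:ℝ)+1) < σ i) with hTdef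
    have hTcard : T.card ≤ m := by
      by_contra hc
      push_neg at hc
      have hTne : T.Nonempty := Finset.card_pos.1 (by omega)
      have h1 : ∑ i ∈ T, (AL/((m:ℝ)+1)) < ∑ i ∈ T, σ i :=
        Finset.sum_lt_sum_of_nonempty hTne (fun i hi => (Finset.mem_filter.1 hi).2)
      have h2 : ∑ i ∈ T, σ i ≤ AL := by
        rw [hALdef]
        exact Finset.sum_le_sum_of_subset_of_nonneg (Finset.filter_subset _ _)
          (fun i _ _ => (hσ i).le)
      rw [Finset.sum_const, nsmul_eq_mul] at h1
      have h3 : ((m:ℝ)+1) * (AL/((m:ℝ)+1)) ≤ (T.card:ℝ) * (AL/((m:ℝ)+1)) := by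
        apply mul_le_mul_of_nonneg_right _ (by positivity)
        have : (m:ℝ)+1 ≤ (T.card:ℝ) := by
          have : m+1 ≤ T.card := hc
          exact_mod_cast this
        linarith
      have h4 : ((m:ℝ)+1)*(AL/((m:ℝ)+1)) = AL := by field_simp
      linarith
    have hBcard : m ≤ (L \ T).card := by
      have h1 : (L \ T).card = L.card - T.card := Finset.card_sdiff_of_subset (Finset.filter_subset _ L)
      rw [hLcard] at h1
      omega
    have hkey : ∀ i ∈ L \ T, s * Real.log (AL/s) ≤ σ i * Real.log (AL/σ i) := by
      intro i hi
      have hiL := (Finset.mem_sdiff.1 hi).1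
      have hiT := (Finset.mem_sdiff.1 hi).2
      have hible : σ i ≤ AL/((m:ℝ)+1) := by
        by_contra hcc
        push_neg at hcc
        exact hiT (Finset.mem_filter.2 ⟨hiL, hcc⟩)
      apply log_ratio_mono hspos (hsle i hiL)
      have he3 : Real.exp 1 ≤ 3 := by
        have := Real.exp_one_lt_d9
        linarith
      have h2 : ((m:ℝ)+1) * σ i ≤ AL := by
        rw [← le_div_iff₀' (by positivity)]
        exact hible
      nlinarith [hσ i, hmR]
    have hmono : ∀ i ∈ L, 0 ≤ σ i * Real.log (AL/σ i) := by
      intro i hi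
      have h1 : σ i ≤ AL := by
        rw [hALdef]
        exact Finset.single_le_sum (fun j _ => (hσ j).le) hi
      have h2 : 0 ≤ Real.log (AL/σ i) := Real.log_nonneg (by rw [le_div_iff₀ (hσ i)]; linarith)
      exact mul_nonneg (hσ i).le h2
    calc (m:ℝ)*s*Real.log (AL/s) = (m:ℝ) * (s*Real.log (AL/s)) := by ring
    _ ≤ ((L \ T).card:ℝ) * (s*Real.log (AL/s)) := by
        apply mul_le_mul_of_nonneg_right _ (by positivity)
        exact_mod_cast hBcard
    _ ≤ ∑ i ∈ L \ T, σ i * Real.log (AL/σ i) := by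
        have := Finset.card_nsmul_le_sum (L \ T) (fun i => σ i * Real.log (AL/σ i))
          (s * Real.log (AL/s)) hkey
        rwa [nsmul_eq_mul] at this
    _ ≤ ∑ i ∈ L, σ i * Real.log (AL/σ i) :=
        Finset.sum_le_sum_of_subset_of_nonneg Finset.sdiff_subset
          (fun i hi _ => hmono i hi)
    _ = fL := by
        rw [hfLdef, hALdef]
        exact (ent_mul_eq L σ hσL).symm
  -- the remainder bound
  have hsAG : s ≤ AG := by linarith
  have hCnn : 0 ≤ Real.log (AG/s) := Real.log_nonneg (by rw [le_div_iff₀ hspos]; linarith)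
  have hR : ∑ i ∈ D, σ i * Real.log (AG/σ i) ≤ 8*(m:ℝ)*s*(1 + Real.log 2 + Real.log (AG/s)) := by
    have hmain : ∀ j ∈ Finset.Icc 1 t, ∑ i ∈ G' j, σ i * Real.log (AG/σ i)
        ≤ (4*(m:ℝ)*s/2^t) * ((2:ℝ)^j * (1 + Real.log (AG/s) + ((t-j:ℕ):ℝ)*Real.log 2)) := by
      intro j hj
      obtain ⟨hj1, hjt⟩ := Finset.mem_Icc.1 hj
      have hy_pos : (0:ℝ) < 2^j * σm := by positivity
      have hyA : (2:ℝ)^j * σm ≤ AG := by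
        have hp : (2:ℝ)^j ≤ 2^t := pow_le_pow_right₀ (by norm_num) hjt
        have h1 : (2:ℝ)^t * σm ≤ 2*s := by
          rw [h2t]
          nlinarith
        nlinarith [hσmpos]
      have hper : ∀ i ∈ G' j, σ i * Real.log (AG/σ i)
          ≤ (2^j * σm) * (Real.log (AG/(2^j * σm)) + 1) := fun i hi =>
        log_crude (hσ i) (hgrp_ub j i (hG'sub j hj1 hi)).le hyA
      have hw : (2:ℝ)^j * σm ≤ 2^(j+1)*s/2^t := by
        rw [le_div_iff₀ (by positivity : (0:ℝ) < (2:ℝ)^t), h2t, pow_succ]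
        nlinarith
      have hlog : Real.log (AG/(2^j * σm)) ≤ Real.log (AG/s) + ((t-j:ℕ):ℝ)*Real.log 2 := by
        have hpow : (2:ℝ)^((t-j:ℕ)) * (2^j * σm) = 2^t * σm := by
          rw [← mul_assoc, ← pow_add]
          congr 2
          omega
        have h1 : AG/(2^j * σm) ≤ (AG/s) * 2^((t-j:ℕ)) := by
          rw [div_le_iff₀ hy_pos, mul_assoc, hpow]
          rw [div_mul_eq_mul_div, le_div_iff₀ hspos] at *
          nlinarith [hts'.le, hAGpos]
        calc Real.log (AG/(2^j * σm)) ≤ Real.log ((AG/s) * 2^((t-j:ℕ))) :=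
          Real.log_le_log (by positivity) h1
        _ = Real.log (AG/s) + ((t-j:ℕ):ℝ)*Real.log 2 := by
            rw [Real.log_mul (by positivity) (by positivity), Real.log_pow]
      have h0 : (0:ℝ) ≤ Real.log (AG/(2^j * σm)) + 1 := by
        have : (0:ℝ) ≤ Real.log (AG/(2^j * σm)) :=
          Real.log_nonneg (by rw [le_div_iff₀ hy_pos]; linarith)
        linarith
      have hbnd : (2^j * σm) * (Real.log (AG/(2^j * σm)) + 1)
          ≤ (2^(j+1)*s/2^t) * (1 + Real.log (AG/s) + ((t-j:ℕ):ℝ)*Real.log 2) := by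
        calc (2^j * σm) * (Real.log (AG/(2^j * σm)) + 1)
            ≤ (2^(j+1)*s/2^t) * (Real.log (AG/(2^j * σm)) + 1) :=
              mul_le_mul_of_nonneg_right hw h0
        _ ≤ (2^(j+1)*s/2^t) * (1 + Real.log (AG/s) + ((t-j:ℕ):ℝ)*Real.log 2) := by
              apply mul_le_mul_of_nonneg_left _ (by positivity)
              linarith
      have hsum1 : ∑ i ∈ G' j, σ i * Real.log (AG/σ i)
          ≤ ((G' j).card : ℝ) * ((2^j * σm) * (Real.log (AG/(2^j * σm)) + 1)) := by
        have := Finset.sum_le_card_nsmul (G' j) (fun i => σ i * Real.log (AG/σ i))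
          ((2^j * σm) * (Real.log (AG/(2^j * σm)) + 1)) hper
        rwa [nsmul_eq_mul] at this
      have hb_nn : (0:ℝ) ≤ (2^j * σm) * (Real.log (AG/(2^j * σm)) + 1) := by positivity
      calc ∑ i ∈ G' j, σ i * Real.log (AG/σ i)
          ≤ ((G' j).card : ℝ) * ((2^j * σm) * (Real.log (AG/(2^j * σm)) + 1)) := hsum1
      _ ≤ (2*(m:ℝ)) * ((2^j * σm) * (Real.log (AG/(2^j * σm)) + 1)) :=
          mul_le_mul_of_nonneg_right (hG'card j hj1) hb_nn
      _ ≤ (2*(m:ℝ)) * ((2^(j+1)*s/2^t) * (1 + Real.log (AG/s) + ((t-j:ℕ):ℝ)*Real.log 2)) := by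
          apply mul_le_mul_of_nonneg_left hbnd (by positivity)
      _ = (4*(m:ℝ)*s/2^t) * ((2:ℝ)^j * (1 + Real.log (AG/s) + ((t-j:ℕ):ℝ)*Real.log 2)) := by
          rw [pow_succ]
          ring
    have hnn : ∀ i ∈ (Finset.Icc 1 t).biUnion G', 0 ≤ σ i * Real.log (AG/σ i) := by
      intro i hi
      have h1 : σ i ≤ AG := by
        rw [hAGdef]
        exact Finset.single_le_sum (fun j _ => (hσ j).le) (hbiGr i hi)
      have h2 : 0 ≤ Real.log (AG/σ i) := Real.log_nonneg (by rw [le_div_iff₀ (hσ i)]; linarith)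
      exact mul_nonneg (hσ i).le h2
    have hsplitsum : ∑ j ∈ Finset.Icc 1 t, (2:ℝ)^j * (1 + Real.log (AG/s) + ((t-j:ℕ):ℝ)*Real.log 2)
        = (1 + Real.log (AG/s)) * (∑ j ∈ Finset.Icc 1 t, (2:ℝ)^j)
          + Real.log 2 * (∑ j ∈ Finset.Icc 1 t, (2:ℝ)^j * ((t-j:ℕ):ℝ)) := by
      rw [Finset.mul_sum, Finset.mul_sum, ← Finset.sum_add_distrib]
      apply Finset.sum_congr rfl
      intro j _
      ring
    have hpos2t : (0:ℝ) < 2^t := by positivity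
    calc ∑ i ∈ D, σ i * Real.log (AG/σ i)
        ≤ ∑ i ∈ (Finset.Icc 1 t).biUnion G', σ i * Real.log (AG/σ i) :=
          Finset.sum_le_sum_of_subset_of_nonneg hDsub (fun i hi _ => hnn i hi)
    _ = ∑ j ∈ Finset.Icc 1 t, ∑ i ∈ G' j, σ i * Real.log (AG/σ i) := Finset.sum_biUnion hdisj
    _ ≤ ∑ j ∈ Finset.Icc 1 t,
          (4*(m:ℝ)*s/2^t) * ((2:ℝ)^j * (1 + Real.log (AG/s) + ((t-j:ℕ):ℝ)*Real.log 2)) :=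
        Finset.sum_le_sum hmain
    _ = (4*(m:ℝ)*s/2^t) *
          ∑ j ∈ Finset.Icc 1 t, (2:ℝ)^j * (1 + Real.log (AG/s) + ((t-j:ℕ):ℝ)*Real.log 2) :=
        (Finset.mul_sum _ _ _).symm
    _ ≤ (4*(m:ℝ)*s/2^t) * ((1 + Real.log (AG/s)) * 2^(t+1) + Real.log 2 * 2^(t+1)) := by
        apply mul_le_mul_of_nonneg_left _ (by positivity)
        rw [hsplitsum]
        have g1 : (1 + Real.log (AG/s)) * (∑ j ∈ Finset.Icc 1 t, (2:ℝ)^j)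
            ≤ (1 + Real.log (AG/s)) * 2^(t+1) :=
          mul_le_mul_of_nonneg_left (aux_geom t) (by linarith)
        have g2 : Real.log 2 * (∑ j ∈ Finset.Icc 1 t, (2:ℝ)^j * ((t-j:ℕ):ℝ))
            ≤ Real.log 2 * 2^(t+1) :=
          mul_le_mul_of_nonneg_left (aux_geom' t) (Real.log_nonneg (by norm_num))
        linarith
    _ = 8*(m:ℝ)*s*(1 + Real.log 2 + Real.log (AG/s)) := by
        rw [pow_succ]
        field_simp
        ring
  -- upper bound on f(Gr)
  have hlog2nn : (0:ℝ) ≤ Real.log 2 := Real.log_nonneg (by norm_num)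
  have hlog5nn : (0:ℝ) ≤ Real.log 5 := Real.log_nonneg (by norm_num)
  have hfG : AG * ent Gr σ ≤ 9*fL + (4 + 4*Real.log 2 + 5*Real.log 5) * AL := by
    have hGr_eq : AG * ent Gr σ = ∑ i ∈ Gr, σ i * Real.log (AG/σ i) := by
      rw [hAGdef]
      exact ent_mul_eq Gr σ (fun i _ => hσ i)
    have hsum_split : ∑ i ∈ Gr, σ i * Real.log (AG/σ i)
        = (∑ i ∈ D, σ i * Real.log (AG/σ i)) + ∑ i ∈ L, σ i * Real.log (AG/σ i) := by
      rw [hDdef]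
      exact (Finset.sum_sdiff hLsub).symm
    have hLpart : ∑ i ∈ L, σ i * Real.log (AG/σ i) ≤ fL + Real.log 5 * AL := by
      have hstep : ∀ i ∈ L, σ i * Real.log (AG/σ i)
          ≤ σ i * Real.log (AL/σ i) + σ i * Real.log 5 := by
        intro i hi
        have h1 : AG/σ i ≤ 5*(AL/σ i) := by
          rw [div_le_iff₀ (hσ i)]
          have he : 5*(AL/σ i)*σ i = 5*AL := by
            rw [mul_assoc, div_mul_cancel₀ _ (hσ i).ne']
          rw [he]
          linarith
        have h2 : Real.log (AG/σ i) ≤ Real.log (5*(AL/σ i)) :=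
          Real.log_le_log (div_pos hAGpos (hσ i)) h1
        have h3 : Real.log (5*(AL/σ i)) = Real.log 5 + Real.log (AL/σ i) :=
          Real.log_mul (by norm_num) (ne_of_gt (div_pos hALpos (hσ i)))
        have h4 := mul_le_mul_of_nonneg_left (h3 ▸ h2) (hσ i).le
        linarith [h4]
      calc ∑ i ∈ L, σ i * Real.log (AG/σ i)
          ≤ ∑ i ∈ L, (σ i * Real.log (AL/σ i) + σ i * Real.log 5) := Finset.sum_le_sum hstep
      _ = (∑ i ∈ L, σ i * Real.log (AL/σ i)) + (∑ i ∈ L, σ i) * Real.log 5 := by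
          rw [Finset.sum_add_distrib, Finset.sum_mul]
      _ = fL + Real.log 5 * AL := by
          rw [hfLdef, hALdef]
          rw [ent_mul_eq L σ hσL]
          ring
    have hClog : Real.log (AG/s) ≤ Real.log 5 + Real.log (AL/s) := by
      have h1 : AG/s ≤ 5*(AL/s) := by
        rw [div_le_iff₀ hspos]
        have he : 5*(AL/s)*s = 5*AL := by
          rw [mul_assoc, div_mul_cancel₀ _ hspos.ne']
        rw [he]
        linarith
      have h2 : Real.log (AG/s) ≤ Real.log (5*(AL/s)) :=
        Real.log_le_log (div_pos hAGpos hspos) h1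
      rw [Real.log_mul (by norm_num) (ne_of_gt (div_pos hALpos hspos))] at h2
      exact h2
    -- combine
    have hms_nn : (0:ℝ) ≤ 8*(m:ℝ)*s := by positivity
    have hc1 : 8*(m:ℝ)*s*(1 + Real.log 2 + Real.log (AG/s))
        ≤ 8*(m:ℝ)*s*(1 + Real.log 2 + Real.log 5) + 8*((m:ℝ)*s*Real.log (AL/s)) := by
      have := mul_le_mul_of_nonneg_left hClog hms_nn
      nlinarith [this]
    have hc2 : 8*((m:ℝ)*s*Real.log (AL/s)) ≤ 8*fL := by linarith
    have hc3 : 8*(m:ℝ)*s*(1 + Real.log 2 + Real.log 5)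
        ≤ 4*AL*(1 + Real.log 2 + Real.log 5) := by
      have h1 : 8*(m:ℝ)*s = 4*(2*(m:ℝ)*s) := by ring
      have h2 : (0:ℝ) ≤ 1 + Real.log 2 + Real.log 5 := by linarith
      nlinarith [hALge]
    rw [hGr_eq, hsum_split]
    have hfin := hR
    nlinarith [hfin, hLpart, hc1, hc2, hc3, hALpos]
  -- numeric facts
  have hlog2lb : (0.6931:ℝ) ≤ Real.log 2 := by
    have := Real.log_two_gt_d9
    linarith
  have hlog5ub : Real.log 5 ≤ 3*Real.log 2 := by
    calc Real.log 5 ≤ Real.log 8 := Real.log_le_log (by norm_num) (by norm_num)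
    _ = 3*Real.log 2 := by
        rw [show (8:ℝ) = 2^(3:ℕ) by norm_num, Real.log_pow]
        push_cast
        ring
  have hfG' : AG * ent Gr σ ≤ 9*fL + 87*Real.log 2*AL := by
    have hconst : 4 + 4*Real.log 2 + 5*Real.log 5 ≤ 87*Real.log 2 := by linarith
    have := mul_le_mul_of_nonneg_right hconst hALpos.le
    linarith
  -- the pairing sum over powersetCard
  have hself : ∀ M ∈ Finset.powersetCard m L, L \ M ∈ Finset.powersetCard m L := by
    intro M hM
    obtain ⟨hsub, hcard⟩ := Finset.mem_powersetCard.1 hM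
    refine Finset.mem_powersetCard.2 ⟨Finset.sdiff_subset, ?_⟩
    rw [Finset.card_sdiff_of_subset hsub, hLcard, hcard]
    omega
  have hbij : ∑ M ∈ Finset.powersetCard m L, (∑ i ∈ L \ M, σ i) * ent (L \ M) σ
      = ∑ M ∈ Finset.powersetCard m L, (∑ i ∈ M, σ i) * ent M σ := by
    apply Finset.sum_nbij' (i := fun M => L \ M) (j := fun M => L \ M)
    · exact hself
    · exact hself
    · intro M hM
      exact Finset.sdiff_sdiff_eq_self (Finset.mem_powersetCard.1 hM).1
    · intro M hM
      exact Finset.sdiff_sdiff_eq_self (Finset.mem_powersetCard.1 hM).1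
    · intro M hM
      rfl
  have hpairsum : (((2*m).choose m : ℝ)) * (fL - Real.log 2 * AL)
      ≤ 2 * ∑ M ∈ Finset.powersetCard m L, (∑ i ∈ M, σ i) * ent M σ := by
    have hpair : ∀ M ∈ Finset.powersetCard m L,
        fL - Real.log 2 * AL
        ≤ (∑ i ∈ M, σ i) * ent M σ + (∑ i ∈ L \ M, σ i) * ent (L \ M) σ := by
      intro M hM
      obtain ⟨hsub, hcard⟩ := Finset.mem_powersetCard.1 hM
      have hMne : M.Nonempty := Finset.card_pos.1 (by omega)
      have hNne : (L \ M).Nonempty := by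
        rw [← Finset.card_pos, Finset.card_sdiff_of_subset hsub, hLcard, hcard]
        omega
      have := pairing hσL hsub hMne hNne
      rw [hfLdef, hALdef]
      exact this
    have h1 : ∑ _M ∈ Finset.powersetCard m L, (fL - Real.log 2 * AL)
        ≤ ∑ M ∈ Finset.powersetCard m L,
            ((∑ i ∈ M, σ i) * ent M σ + (∑ i ∈ L \ M, σ i) * ent (L \ M) σ) :=
      Finset.sum_le_sum hpair
    rw [Finset.sum_add_distrib, hbij, Finset.sum_const, nsmul_eq_mul,
      Finset.card_powersetCard, hLcard] at h1
    linarith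
  have htermnn : ∀ M ∈ Finset.powersetCard m L, 0 ≤ (∑ i ∈ M, σ i) * ent M σ := by
    intro M hM
    have hsub := (Finset.mem_powersetCard.1 hM).1
    exact mul_nonneg (Finset.sum_nonneg fun i _ => (hσ i).le)
      (ent_nonneg M σ (fun i hi => hσ i))
  have hSnn : 0 ≤ ∑ M ∈ Finset.powersetCard m L, (∑ i ∈ M, σ i) * ent M σ :=
    Finset.sum_nonneg htermnn
  have hchpos : (0:ℝ) < ((2*m).choose (m-1) : ℝ) := by
    have : 0 < (2*m).choose (m-1) := Nat.choose_pos (by omega)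
    exact_mod_cast this
  have hchle : (((2*m).choose (m-1) : ℕ) : ℝ) ≤ (((2*m).choose m : ℕ) : ℝ) := by
    have h1 := Nat.choose_le_middle (m-1) (2*m)
    rw [Nat.mul_div_cancel_left m (by norm_num : 0 < 2)] at h1
    exact_mod_cast h1
  have hE : (1/2)*(fL - Real.log 2 * AL)
      ≤ (1 / ((2*m).choose (m-1) : ℝ)) *
          ∑ M ∈ Finset.powersetCard m L, (∑ i ∈ M, σ i) * ent M σ := by
    rcases le_or_gt 0 (fL - Real.log 2 * AL) with hX | hX
    · have h1 : (((2*m).choose (m-1):ℕ):ℝ) * (fL - Real.log 2 * AL)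
          ≤ (((2*m).choose m:ℕ):ℝ) * (fL - Real.log 2 * AL) :=
        mul_le_mul_of_nonneg_right hchle hX
      have hc : (1 / ((2*m).choose (m-1) : ℝ)) *
          (∑ M ∈ Finset.powersetCard m L, (∑ i ∈ M, σ i) * ent M σ)
          = (∑ M ∈ Finset.powersetCard m L, (∑ i ∈ M, σ i) * ent M σ)
            / ((2*m).choose (m-1) : ℝ) := by ring
      rw [hc, le_div_iff₀ hchpos]
      nlinarith [hpairsum, h1]
    · have h2 : 0 ≤ (1 / ((2*m).choose (m-1) : ℝ)) *
          ∑ M ∈ Finset.powersetCard m L, (∑ i ∈ M, σ i) * ent M σ := by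
        apply mul_nonneg (by positivity) hSnn
      nlinarith [h2, hX]
  -- final assembly
  rw [ge_iff_le]
  have hfinal : (1/174) * AG * ent Gr σ ≤ (1/2)*fL + (1/2)*(Real.log 2 * AL) := by
    have h1 : (1/174) * (AG * ent Gr σ) ≤ (1/174)*(9*fL + 87*Real.log 2*AL) := by
      linarith [hfG']
    have h2 : (1/174)*(9*fL + 87*Real.log 2*AL) ≤ (1/2)*fL + (1/2)*(Real.log 2 * AL) := by
      linarith [hfLnn]
    calc (1/174) * AG * ent Gr σ = (1/174) * (AG * ent Gr σ) := by ring
    _ ≤ (1/2)*fL + (1/2)*(Real.log 2 * AL) := le_trans h1 h2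
  linarith [hE, hfinal]
end

section
/- Let m ≥ 1 be an integer and let α ∈ (0, 1]. Consider the family v of 2m positive reals consisting of one entry equal to 1 − ((2m−1)/(2m))·α and 2m − 1 entries each equal to α/(2m). Then (1 + 1/α) · Ent(v) ≥ (1/2) · ln(2m). -/
/-!
Since the weights sum to `1`, `Ent(v) = η(p) + (2m - 1) η(q)` with `η(x) = -x ln x`,
`p = 1 - (2m - 1)α/(2m)` and `q = α/(2m)`. Here `η(p) ≥ 0`, and `α ≤ 1` gives
`η(q) = q ln(2m/α) ≥ q ln(2m)`, so `Ent(v) ≥ (2m - 1) q ln(2m) ≥ (α/2) ln(2m)`;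
multiplying by `1 + 1/α ≥ 1/α` gives the claim.
-/

open Finset Real
open scoped Classical

lemma Fin.sum_ite_val_eq_zero {n : ℕ} [NeZero n] (a b : ℝ) :
    ∑ i : Fin n, (if (i : ℕ) = 0 then a else b) = a + (n - 1) * b := by
  rw [← add_sum_erase _ _ (mem_univ 0),
    sum_congr rfl fun i hi => if_neg (Fin.val_ne_zero_iff.mpr (ne_of_mem_erase hi)),
    Finset.sum_const, card_erase_of_mem (mem_univ 0)]
  simp [Nat.cast_sub NeZero.one_le]

lemma ent_ite_val_eq_zero {n : ℕ} [NeZero n] {a b : ℝ} (h : a + (n - 1) * b = 1) :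
    ent univ (fun i : Fin n => if (i : ℕ) = 0 then a else b) =
      negMulLog a + (n - 1) * negMulLog b := by
  simp only [ent, Fin.sum_ite_val_eq_zero, h, div_one, ← sum_neg_distrib, ← neg_mul]
  rw [← Fin.sum_ite_val_eq_zero]
  exact sum_congr rfl fun i _ => by split_ifs <;> rfl

lemma half_mul_log_le_negMulLog_add {N α : ℝ} (hN : 2 ≤ N) (hα0 : 0 < α) (hα1 : α ≤ 1) :
    α / 2 * log N ≤ negMulLog (1 - (N - 1) / N * α) + (N - 1) * negMulLog (α / N) := by
  have hN0 : 0 < N := by linarith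
  have hlogN : 0 ≤ log N := log_nonneg (by linarith)
  have hp : 0 ≤ negMulLog (1 - (N - 1) / N * α) := by
    have hr0 : 0 ≤ (N - 1) / N := div_nonneg (by linarith) hN0.le
    have hr1 : (N - 1) / N ≤ 1 := div_le_one_of_le₀ (by linarith) hN0.le
    apply negMulLog_nonneg
    · linarith [mul_le_one₀ hr1 hα0.le hα1]
    · linarith [mul_nonneg hr0 hα0.le]
  have hq : α / N * log N ≤ negMulLog (α / N) := by
    have : 0 ≤ α / N := by positivity
    rw [negMulLog, log_div hα0.ne' hN0.ne']
    nlinarith [log_nonpos hα0.le hα1]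
  calc α / 2 * log N ≤ (N - 1) * (α / N) * log N := by
        gcongr
        rw [mul_div_assoc', le_div_iff₀ hN0]
        nlinarith
    _ ≤ (N - 1) * negMulLog (α / N) := by
        rw [mul_assoc]
        gcongr
        linarith
    _ ≤ negMulLog (1 - (N - 1) / N * α) + (N - 1) * negMulLog (α / N) := by linarith

/-- **Entropy lower bound for the extremal family.** For `m ≥ 1` and `α ∈ (0, 1]`, the
family of `2m` positive reals with one entry `1 - ((2m-1)/(2m))α` and `2m - 1` entries
`α/(2m)` has entropy at least `ln(2m)/(2(1 + 1/α))`. -/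
theorem stmt_12 (m : ℕ) (hm : 1 ≤ m) (α : ℝ) (hα0 : 0 < α) (hα1 : α ≤ 1) :
    (1 + 1 / α) *
        ent Finset.univ (fun i : Fin (2 * m) =>
          if (i : ℕ) = 0 then 1 - ((2 * m - 1 : ℝ) / (2 * m)) * α else α / (2 * m))
      ≥ (1 / 2) * Real.log (2 * m) := by
  have : NeZero (2 * m) := ⟨by omega⟩
  have hN : (2 : ℝ) ≤ 2 * m := by
    have : (1 : ℝ) ≤ m := by exact_mod_cast hm
    linarith
  have hsum :
      1 - ((2 * m - 1 : ℝ) / (2 * m)) * α + (((2 * m : ℕ) : ℝ) - 1) * (α / (2 * m)) = 1 := by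
    push_cast
    field_simp
    ring
  rw [ent_ite_val_eq_zero hsum]
  push_cast
  set H := negMulLog (1 - ((2 * m - 1 : ℝ) / (2 * m)) * α) + (2 * m - 1) * negMulLog (α / (2 * m))
  have key : α / 2 * log (2 * m) ≤ H := half_mul_log_le_negMulLog_add hN hα0 hα1
  have hH : 0 ≤ H := by
    have := log_nonneg (by linarith : (1 : ℝ) ≤ 2 * m)
    exact le_trans (by positivity) key
  calc (1 / 2) * log (2 * m) = 1 / α * (α / 2 * log (2 * m)) := by field_simp
    _ ≤ 1 / α * H := by gcongr
    _ ≤ (1 + 1 / α) * H := by gcongr; linarith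
end

section
/- Let N ≥ 1 be an integer and let a = (a_1, …, a_N) be positive reals with sum S := ∑_{i=1}^N a_i and minimum t := min_{i∈[N]} a_i. Let b be the family of N positive reals consisting of one entry equal to S − (N−1)·t and N − 1 entries each equal to t. Then Ent(a) ≥ Ent(b). -/
/-! Since `Ent(a) = log S - (∑ aᵢ log aᵢ) / S`, with the total `S` fixed it suffices to show that
`∑ aᵢ log aᵢ` is largest for the family `b`. By convexity of `x ↦ x log x`, replacing two entries
`x, y ≥ t` by `t` and `x + y - t` (same sum, further apart) can only increase `x log x + y log y`;
iterating this moves all the mass above `t` into a single entry, which is `b`. -/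

open Finset Real
open scoped Classical

theorem ConvexOn.map_add_map_le_map_add_map_add_sub {f : ℝ → ℝ} {t x y : ℝ}
    (hf : ConvexOn ℝ (Set.Ici t) f) (hx : t ≤ x) (hy : t ≤ y) :
    f x + f y ≤ f t + f (x + y - t) := by
  rcases hx.eq_or_lt with rfl | hx'
  · simp
  have hd : 0 < x + y - 2 * t := by linarith
  set θ := (y - t) / (x + y - 2 * t)
  have hθ₀ : 0 ≤ θ := div_nonneg (by linarith) hd.le
  have hθ₁ : 0 ≤ 1 - θ := sub_nonneg.2 <| (div_le_one hd).2 (by linarith)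
  have hθd : θ * (x + y - 2 * t) = y - t := div_mul_cancel₀ _ hd.ne'
  have hx_eq : θ • t + (1 - θ) • (x + y - t) = x := by
    simp only [smul_eq_mul]; linear_combination -hθd
  have hy_eq : (1 - θ) • t + θ • (x + y - t) = y := by
    simp only [smul_eq_mul] at hx_eq ⊢; linarith
  have ht_mem : t ∈ Set.Ici t := Set.mem_Ici.2 le_rfl
  have hs_mem : x + y - t ∈ Set.Ici t := by simp only [Set.mem_Ici]; linarith
  have h₁ := hf.2 ht_mem hs_mem hθ₀ hθ₁ (by ring)
  have h₂ := hf.2 ht_mem hs_mem hθ₁ hθ₀ (by ring)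
  rw [hx_eq] at h₁
  rw [hy_eq] at h₂
  simp only [smul_eq_mul] at h₁ h₂
  linarith

theorem ConvexOn.sum_map_le_of_forall_le {ι : Type*} {f : ℝ → ℝ} {t : ℝ}
    (hf : ConvexOn ℝ (Set.Ici t) f) (s : Finset ι) {a : ι → ℝ} (ha : ∀ i ∈ s, t ≤ a i) :
    ∑ i ∈ s, f (a i) ≤ f (∑ i ∈ s, a i - (#s - 1) * t) + (#s - 1) * f t := by
  induction s using Finset.cons_induction with
  | empty => simp
  | cons j s hj ih =>
    simp only [Finset.forall_mem_cons] at ha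
    have hst : #s * t ≤ ∑ i ∈ s, a i := by
      simpa [nsmul_eq_mul] using Finset.card_nsmul_le_sum s a t ha.2
    have hpair := hf.map_add_map_le_map_add_map_add_sub ha.1
      (show t ≤ ∑ i ∈ s, a i - (#s - 1) * t by linarith)
    have hcombine : a j + (∑ i ∈ s, a i - (#s - 1) * t) - t =
        ∑ i ∈ s.cons j hj, a i - (#(s.cons j hj) - 1) * t := by
      rw [sum_cons, card_cons]; push_cast; ring
    calc ∑ i ∈ s.cons j hj, f (a i)
        = f (a j) + ∑ i ∈ s, f (a i) := sum_cons hj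
      _ ≤ f (a j) + (f (∑ i ∈ s, a i - (#s - 1) * t) + (#s - 1) * f t) := by gcongr; exact ih ha.2
      _ ≤ f t + f (a j + (∑ i ∈ s, a i - (#s - 1) * t) - t) + (#s - 1) * f t := by linarith
      _ = _ := by rw [hcombine, card_cons]; push_cast; ring

theorem ent_eq_log_sum_sub_sum_mul_log_div {ι : Type*} (S : Finset ι) (a : ι → ℝ)
    (ha : ∀ i ∈ S, a i ≠ 0) (hA : ∑ j ∈ S, a j ≠ 0) :
    ent S a = Real.log (∑ j ∈ S, a j) - (∑ i ∈ S, a i * Real.log (a i)) / ∑ j ∈ S, a j := by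
  have hterm : ∀ i ∈ S, a i / (∑ j ∈ S, a j) * Real.log (a i / ∑ j ∈ S, a j) =
      a i * Real.log (a i) / (∑ j ∈ S, a j) -
        a i / (∑ j ∈ S, a j) * Real.log (∑ j ∈ S, a j) := fun i hi => by
    rw [Real.log_div (ha i hi) hA]; ring
  rw [ent, sum_congr rfl hterm, sum_sub_distrib, ← sum_div, ← sum_mul, ← sum_div, div_self hA,
    one_mul]
  ring

theorem ent_le_ent_of_sum_eq_of_sum_mul_log_le {ι : Type*} {S : Finset ι} {a b : ι → ℝ}
    (ha : ∀ i ∈ S, 0 < a i) (hb : ∀ i ∈ S, 0 < b i) (hsum : ∑ i ∈ S, b i = ∑ i ∈ S, a i)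
    (hmul_log : ∑ i ∈ S, a i * Real.log (a i) ≤ ∑ i ∈ S, b i * Real.log (b i)) :
    ent S b ≤ ent S a := by
  rcases S.eq_empty_or_nonempty with rfl | hS
  · simp [ent]
  have hA : 0 < ∑ i ∈ S, a i := sum_pos ha hS
  rw [ent_eq_log_sum_sub_sum_mul_log_div S a (fun i hi => (ha i hi).ne') hA.ne',
    ent_eq_log_sum_sub_sum_mul_log_div S b (fun i hi => (hb i hi).ne') (hsum ▸ hA.ne'), hsum]
  gcongr

theorem Fintype.sum_comp_ite_eq {ι : Type*} [Fintype ι] [DecidableEq ι] (z : ι) (g : ℝ → ℝ)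
    (c t : ℝ) :
    ∑ i, g (if i = z then c else t) = g c + (Fintype.card ι - 1) * g t := by
  rw [Fintype.sum_eq_add_sum_compl z, if_pos rfl,
    Finset.sum_congr rfl (g := fun _ => g t) fun i hi => by
      rw [if_neg (mem_compl.1 hi ∘ mem_singleton.2)], Finset.sum_const,
    Finset.card_compl, Finset.card_singleton, nsmul_eq_mul,
    Nat.cast_sub (Fintype.card_pos_iff.2 ⟨z⟩), Nat.cast_one]

/-- **Entropy is minimized by the concentrated family.** For positive reals
`a_1, …, a_N` with sum `S` and minimum `t`, the family with one entry `S - (N-1)t` and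
`N - 1` entries `t` has entropy at most `Ent(a)`. -/
theorem stmt_13 (N : ℕ) (hN : 1 ≤ N) (a : Fin N → ℝ) (ha : ∀ i, 0 < a i) :
    ent Finset.univ a ≥
      ent Finset.univ (fun i : Fin N =>
        if (i : ℕ) = 0 then
          (∑ j, a j) - ((N : ℝ) - 1) * Finset.univ.inf' ⟨⟨0, hN⟩, Finset.mem_univ _⟩ a
        else Finset.univ.inf' ⟨⟨0, hN⟩, Finset.mem_univ _⟩ a) := by
  set t := Finset.univ.inf' ⟨⟨0, hN⟩, Finset.mem_univ _⟩ a
  set c := (∑ j, a j) - ((N : ℝ) - 1) * t with hc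
  have ht : 0 < t := (Finset.lt_inf'_iff _).2 fun i _ => ha i
  have hta : ∀ i, t ≤ a i := fun i => Finset.inf'_le a (mem_univ i)
  have hNt : N * t ≤ ∑ j, a j := by
    simpa [nsmul_eq_mul] using Finset.card_nsmul_le_sum univ a t fun i _ => hta i
  have hb : (fun i : Fin N => if (i : ℕ) = 0 then c else t) =
      fun i => if i = ⟨0, hN⟩ then c else t := by
    ext i; simp [Fin.ext_iff]
  rw [ge_iff_le, hb]
  refine ent_le_ent_of_sum_eq_of_sum_mul_log_le (fun i _ => ha i) (fun i _ => ?_) ?_ ?_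
  · split_ifs <;> linarith
  · rw [Fintype.sum_comp_ite_eq _ (fun x => x), Fintype.card_fin, hc]
    ring
  · have hf := Real.convexOn_mul_log.subset (Set.Ici_subset_Ici.2 ht.le) (convex_Ici t)
    rw [Fintype.sum_comp_ite_eq _ (fun x => x * Real.log x), Fintype.card_fin]
    simpa using hf.sum_map_le_of_forall_le univ fun i _ => hta i
end

section
/- Let m ≥ 2 be an integer, let G be a finite set, and let σ² = (σ_i²)_{i∈G} be positive reals. Suppose there exists G' ⊆ G with |G'| > 2m such that σ_i² ≤ 2σ_j² for all i ∈ G and j ∈ G'. Then for every i ∈ G, ∑_{F⊆G\{i\}, |F|=m−1} ∏_{l∈F} σ_l² ≥ (1/3) · ∑_{F⊆G, |F|=m−1} ∏_{l∈F} σ_l², where both sums range over (m−1)-element subsets F of the indicated sets. -/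
/-!
Here `σ l` plays the role of `σ_l²`. Write `A = G \ {i}` and `e_k` for the `k`-th elementary
symmetric sum of `σ` over `A`. Splitting off `i`, the sum over `G` is `e_{m-1} + σ_i e_{m-2}`, so it
suffices that `σ_i e_{m-2} ≤ 2 e_{m-1}`. An `(m-2)`-set `t ⊆ A` misses at least `m - 1` indices
`j ∈ G' \ {i}`, each with `σ_i / 2 ≤ σ_j`. Extending `t` by such a `j` and double counting (every
`(m-1)`-set arises from exactly `m - 1` pairs `(t, j)`) gives
`(m-1) (σ_i / 2) e_{m-2} ≤ (m-1) e_{m-1}`.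
-/

open Finset

section ElementarySymmetric

variable {ι R : Type*}

def esymmSum [CommSemiring R] (s : Finset ι) (f : ι → R) (k : ℕ) : R :=
  ∑ t ∈ s.powersetCard k, ∏ l ∈ t, f l

theorem esymmSum_insert_succ [CommSemiring R] [DecidableEq ι] {s : Finset ι} {i : ι}
    (hi : i ∉ s) (f : ι → R) (k : ℕ) :
    esymmSum (insert i s) f (k + 1) = esymmSum s f (k + 1) + f i * esymmSum s f k := by
  have hi_notMem : ∀ t ∈ s.powersetCard k, i ∉ t := fun t ht h =>
    hi ((mem_powersetCard.1 ht).1 h)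
  rw [esymmSum, powersetCard_succ_insert hi, sum_union, sum_image, esymmSum, esymmSum, mul_sum]
  · exact congrArg _ (sum_congr rfl fun t ht => prod_insert (hi_notMem t ht))
  · intro t ht u hu htu
    rw [← erase_insert (hi_notMem t ht), ← erase_insert (hi_notMem u hu)]
    exact congrArg (·.erase i) htu
  · refine disjoint_left.2 fun u hu hu' => ?_
    obtain ⟨t, -, rfl⟩ := mem_image.1 hu'
    exact hi ((mem_powersetCard.1 hu).1 (mem_insert_self i t))

theorem sum_powersetCard_sum_sdiff_mul_prod [CommSemiring R] [DecidableEq ι]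
    (s : Finset ι) (f : ι → R) (k : ℕ) :
    ∑ t ∈ s.powersetCard k, ∑ j ∈ s \ t, f j * ∏ l ∈ t, f l
      = ((k : R) + 1) * esymmSum s f (k + 1) := by
  have hcard : ((k : R) + 1) * esymmSum s f (k + 1)
      = ∑ u ∈ s.powersetCard (k + 1), ∑ _j ∈ u, ∏ l ∈ u, f l := by
    rw [esymmSum, mul_sum]
    refine sum_congr rfl fun u hu => ?_
    rw [sum_const, (mem_powersetCard.1 hu).2, nsmul_eq_mul, Nat.cast_succ]
  rw [hcard, sum_sigma', sum_sigma']
  refine sum_nbij' (fun p => ⟨insert p.2 p.1, p.2⟩) (fun p => ⟨p.1.erase p.2, p.2⟩)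
    ?_ ?_ ?_ ?_ ?_
  · rintro ⟨t, j⟩ h
    simp only [mem_sigma, mem_powersetCard, mem_sdiff] at h ⊢
    exact ⟨⟨insert_subset h.2.1 h.1.1, by rw [card_insert_of_notMem h.2.2, h.1.2]⟩,
      mem_insert_self j t⟩
  · rintro ⟨u, j⟩ h
    simp only [mem_sigma, mem_powersetCard, mem_sdiff] at h ⊢
    refine ⟨⟨(erase_subset j u).trans h.1.1, ?_⟩, h.1.1 h.2, notMem_erase j u⟩
    rw [card_erase_of_mem h.2, h.1.2, Nat.add_sub_cancel]
  · rintro ⟨t, j⟩ h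
    simp only [mem_sigma, mem_sdiff] at h
    rw [erase_insert h.2.2]
  · rintro ⟨u, j⟩ h
    simp only [mem_sigma] at h
    rw [insert_erase h.2]
  · rintro ⟨t, j⟩ h
    simp only [mem_sigma, mem_sdiff] at h
    exact (prod_insert h.2.2).symm

theorem mul_esymmSum_le_esymmSum_succ [CommSemiring R] [LinearOrder R] [IsStrictOrderedRing R]
    [DecidableEq ι] {s S : Finset ι} {f : ι → R} {c : R} {k : ℕ}
    (hf : ∀ j ∈ s, 0 ≤ f j) (hc : 0 ≤ c) (hSs : S ⊆ s) (hcS : ∀ j ∈ S, c ≤ f j)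
    (hS : 2 * k + 1 ≤ #S) :
    c * esymmSum s f k ≤ esymmSum s f (k + 1) := by
  have hprod : ∀ t ∈ s.powersetCard k, 0 ≤ ∏ l ∈ t, f l := fun t ht =>
    prod_nonneg fun l hl => hf l ((mem_powersetCard.1 ht).1 hl)
  refine le_of_mul_le_mul_left ?_ (by positivity : (0 : R) < k + 1)
  calc ((k : R) + 1) * (c * esymmSum s f k)
      = ∑ t ∈ s.powersetCard k, ((k : R) + 1) * (c * ∏ l ∈ t, f l) := by
        rw [esymmSum, mul_sum, mul_sum]
    _ ≤ ∑ t ∈ s.powersetCard k, ∑ j ∈ S \ t, f j * ∏ l ∈ t, f l := by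
        refine sum_le_sum fun t ht => ?_
        have hfree : k + 1 ≤ #(S \ t) := by
          have := le_card_sdiff t S
          have := (mem_powersetCard.1 ht).2
          omega
        calc ((k : R) + 1) * (c * ∏ l ∈ t, f l)
            ≤ #(S \ t) • (c * ∏ l ∈ t, f l) := by
              rw [nsmul_eq_mul]
              exact mul_le_mul_of_nonneg_right (by exact_mod_cast hfree)
                (mul_nonneg hc (hprod t ht))
          _ ≤ ∑ j ∈ S \ t, f j * ∏ l ∈ t, f l :=
              card_nsmul_le_sum _ _ _ fun j hj =>
                mul_le_mul_of_nonneg_right (hcS j (mem_sdiff.1 hj).1) (hprod t ht)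
    _ ≤ ∑ t ∈ s.powersetCard k, ∑ j ∈ s \ t, f j * ∏ l ∈ t, f l := by
        refine sum_le_sum fun t ht => sum_le_sum_of_subset_of_nonneg
          (sdiff_subset_sdiff hSs le_rfl) fun j hj _ => ?_
        exact mul_nonneg (hf j (mem_sdiff.1 hj).1) (hprod t ht)
    _ = ((k : R) + 1) * esymmSum s f (k + 1) := sum_powersetCard_sum_sdiff_mul_prod s f k

end ElementarySymmetric

theorem stmt_15_general {ι : Type*} [DecidableEq ι] (m : ℕ)
    (G : Finset ι) (σ : ι → ℝ) (hσ : ∀ i ∈ G, 0 < σ i)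
    (G' : Finset ι) (hG'sub : G' ⊆ G) (hG'card : 2 * m < G'.card)
    (hratio : ∀ i ∈ G, ∀ j ∈ G', σ i ≤ 2 * σ j)
    (i : ι) (hi : i ∈ G) :
    ∑ F ∈ Finset.powersetCard (m - 1) (G.erase i), ∏ l ∈ F, σ l
      ≥ (1 / 3) * ∑ F ∈ Finset.powersetCard (m - 1) G, ∏ l ∈ F, σ l := by
  rcases hk : m - 1 with _ | k
  · norm_num
  have hkey : σ i / 2 * esymmSum (G.erase i) σ k ≤ esymmSum (G.erase i) σ (k + 1) :=
    mul_esymmSum_le_esymmSum_succ (fun j hj => (hσ j (mem_of_mem_erase hj)).le)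
      (half_pos (hσ i hi)).le (erase_subset_erase i hG'sub)
      (fun j hj => by linarith [hratio i hi j (mem_of_mem_erase hj)])
      (by have := pred_card_le_card_erase (s := G') (a := i); omega)
  have hsplit := esymmSum_insert_succ (notMem_erase i G) σ k
  rw [insert_erase hi] at hsplit
  change esymmSum (G.erase i) σ (k + 1) ≥ 1 / 3 * esymmSum G σ (k + 1)
  linarith

/-- **Elementary symmetric sums avoiding one index.** If `G` contains a subset `G'` with
`|G'| > 2m` such that `σ_i² ≤ 2σ_j²` for all `i ∈ G`, `j ∈ G'`, then for every `i ∈ G`,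
`∑_{F ⊆ G \ {i}, |F| = m-1} ∏_{l∈F} σ_l² ≥ (1/3) ∑_{F ⊆ G, |F| = m-1} ∏_{l∈F} σ_l²`. -/
theorem stmt_15 {ι : Type*} [DecidableEq ι] (m : ℕ) (hm : 2 ≤ m)
    (G : Finset ι) (σ : ι → ℝ) (hσ : ∀ i ∈ G, 0 < σ i)
    (G' : Finset ι) (hG'sub : G' ⊆ G) (hG'card : 2 * m < G'.card)
    (hratio : ∀ i ∈ G, ∀ j ∈ G', σ i ≤ 2 * σ j)
    (i : ι) (hi : i ∈ G) :
    ∑ F ∈ Finset.powersetCard (m - 1) (G.erase i), ∏ l ∈ F, σ l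
      ≥ (1 / 3) * ∑ F ∈ Finset.powersetCard (m - 1) G, ∏ l ∈ F, σ l :=
  stmt_15_general m G σ hσ G' hG'sub hG'card hratio i hi
end
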